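/- arXiv:2504.18879 — 2 statements merged into one kernel-verified Lean document; each statement's English description precedes it below -/
import Mathlib

section
/- For every d ≥ 0 and all a, b ∈ ℕ, one has in K: S_d(a)·S_d(b) = S_d(a+b) + Σ_{i+j=a+b, i,j ≥ 1, (q−1)∣j} Δ^{i,j}_{a,b}·S_d(i,j), where S_d(i,j) denotes the depth-two power sum of the index (i,j). -/
open Polynomial

/-- The monic polynomial of degree `i` with lower-order coefficients `c`. Monic polynomials
of degree `i` over `Fq` are exactly `monicOf Fq i c` for a unique `c : Fin i → Fq`. -/
noncomputable def monicOf (Fq : Type) [Field Fq] (i : ℕ) (c : Fin i → Fq) : Fq[X] :=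
  X ^ i + ∑ j : Fin i, C (c j) * X ^ (j : ℕ)

/-- The truncated power sum `S_{<d}(𝔞) = ∑_{i<d} S_i(𝔞)`, i.e. the sum of
`1/(f₁^{a₁} ⋯ f_m^{a_m})` over monic `f₁, …, f_m` with `d > deg f₁ > ⋯ > deg f_m ≥ 0`. -/
noncomputable def Slt (Fq : Type) [Field Fq] [Fintype Fq] : List ℕ → ℕ → RatFunc Fq
  | [], _ => 1
  | a :: rest, d =>
      ∑ i ∈ Finset.range d, ∑ c : Fin i → Fq,
        ((algebraMap Fq[X] (RatFunc Fq) (monicOf Fq i c))⁻¹) ^ a * Slt Fq rest i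

/-- Thakur's power sum `S_d(𝔞)`, the sum of `1/(f₁^{a₁} ⋯ f_m^{a_m})` over monic
`f₁, …, f_m ∈ A₊` with `d = deg f₁ > ⋯ > deg f_m ≥ 0`. -/
noncomputable def Sd (Fq : Type) [Field Fq] [Fintype Fq] (l : List ℕ) (d : ℕ) : RatFunc Fq :=
  Slt Fq l (d + 1) - Slt Fq l d

/-- `Δ^{i,j}_{a,b} = (-1)^{a-1} C(j-1,a-1) + (-1)^{b-1} C(j-1,b-1) ∈ 𝔽_p`. -/
def Del (p : ℕ) (a b i j : ℕ) : ZMod p :=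
  (-1 : ZMod p) ^ (a - 1) * ((j - 1).choose (a - 1) : ZMod p) +
    (-1 : ZMod p) ^ (b - 1) * ((j - 1).choose (b - 1) : ZMod p)

instance ratFuncCharP (Fq : Type) [Field Fq] (p : ℕ) [CharP Fq p] :
    CharP (RatFunc Fq) p :=
  charP_of_injective_algebraMap (algebraMap Fq (RatFunc Fq)).injective p

/-! ### Auxiliary material for the proof -/

open Finset

set_option linter.unusedSectionVars false

/-- Partial fraction expansion of `x⁻ᵃ y⁻ᵇ` in powers of `(y - x)⁻¹`. -/
theorem PFaux {K : Type*} [Field K] (n : ℕ) : ∀ a b : ℕ, a + b = n + 1 →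
    ∀ x y : K, x ≠ 0 → y ≠ 0 → y - x ≠ 0 →
    x⁻¹ ^ a * y⁻¹ ^ b =
      (∑ i ∈ Icc 1 a, (-1 : K) ^ (a - i) * ((a + b - i - 1).choose (a - i) : K)
          * (y - x)⁻¹ ^ (a + b - i) * x⁻¹ ^ i)
      + ∑ j ∈ Icc 1 b, (-1 : K) ^ a * ((a + b - j - 1).choose (b - j) : K)
          * (y - x)⁻¹ ^ (a + b - j) * y⁻¹ ^ j := by
  induction n with
  | zero =>
    rintro a b hab x y hx hy h
    obtain ⟨rfl, rfl⟩ | ⟨rfl, rfl⟩ : (a = 1 ∧ b = 0) ∨ (a = 0 ∧ b = 1) := by omega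
    · simp
    · simp
  | succ n ih =>
    rintro a b hab x y hx hy h
    match a, b with
    | 0, b =>
      rw [Finset.Icc_eq_empty (by omega), Finset.sum_empty, zero_add,
        Finset.sum_eq_single_of_mem b (by rw [mem_Icc]; omega)]
      · simp
      · intro j hj hjb
        rw [mem_Icc] at hj
        rw [Nat.choose_eq_zero_of_lt (show 0 + b - j - 1 < b - j by omega)]
        simp
    | (A+1), 0 =>
      rw [Finset.Icc_eq_empty (by omega : ¬(1:ℕ) ≤ 0), Finset.sum_empty, add_zero,
        Finset.sum_eq_single_of_mem (A+1) (by rw [mem_Icc]; omega)]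
      · simp
      · intro i hi hia
        rw [mem_Icc] at hi
        rw [Nat.choose_eq_zero_of_lt (show A+1 + 0 - i - 1 < A+1 - i by omega)]
        simp
    | (A+1), (B+1) =>
    have ka := ih (A+1) B (by omega) x y hx hy h
    have kb := ih A (B+1) (by omega) x y hx hy h
    have key : x⁻¹ ^ (A+1) * y⁻¹ ^ (B+1) =
        (y - x)⁻¹ * (x⁻¹ ^ (A+1) * y⁻¹ ^ B) - (y - x)⁻¹ * (x⁻¹ ^ A * y⁻¹ ^ (B+1)) := by
      have h1 : (y - x)⁻¹ * (x⁻¹ ^ (A+1) * y⁻¹ ^ B) - (y - x)⁻¹ * (x⁻¹ ^ A * y⁻¹ ^ (B+1))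
          = (y - x)⁻¹ * (x⁻¹ ^ A * y⁻¹ ^ B) * (x⁻¹ - y⁻¹) := by ring
      have h2 : x⁻¹ - y⁻¹ = (y - x) * (x⁻¹ * y⁻¹) := by field_simp
      rw [h1, h2, show (y - x)⁻¹ * (x⁻¹ ^ A * y⁻¹ ^ B) * ((y - x) * (x⁻¹ * y⁻¹))
          = ((y - x)⁻¹ * (y - x)) * (x⁻¹ ^ (A+1) * y⁻¹ ^ (B+1)) by ring,
        inv_mul_cancel₀ h, one_mul]
    have perterm1 : ∀ i ∈ Icc 1 A,
        (-1 : K) ^ (A+1 - i) * ((A+1 + (B+1) - i - 1).choose (A+1 - i) : K)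
            * (y - x)⁻¹ ^ (A+1 + (B+1) - i) * x⁻¹ ^ i
        = (y - x)⁻¹ * ((-1 : K) ^ (A+1 - i) * ((A+1 + B - i - 1).choose (A+1 - i) : K)
            * (y - x)⁻¹ ^ (A+1 + B - i) * x⁻¹ ^ i)
          - (y - x)⁻¹ * ((-1 : K) ^ (A - i) * ((A + (B+1) - i - 1).choose (A - i) : K)
            * (y - x)⁻¹ ^ (A + (B+1) - i) * x⁻¹ ^ i) := by
      intro i hi
      rw [mem_Icc] at hi
      have e1 : A+1 + (B+1) - i - 1 = (A + B - i) + 1 := by omega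
      have e2 : A+1 - i = (A - i) + 1 := by omega
      have e3 : A+1 + B - i - 1 = A + B - i := by omega
      have e4 : A + (B+1) - i - 1 = A + B - i := by omega
      have e6 : A+1 + (B+1) - i = (A+1 + B - i) + 1 := by omega
      have e7 : A + (B+1) - i = A+1 + B - i := by omega
      rw [e1, e2, Nat.choose_succ_succ, e3, e4, e6, e7]
      push_cast
      ring
    have hend1 : (-1 : K) ^ (A+1 - (A+1)) * ((A+1 + (B+1) - (A+1) - 1).choose (A+1 - (A+1)) : K)
            * (y - x)⁻¹ ^ (A+1 + (B+1) - (A+1)) * x⁻¹ ^ (A+1)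
        = (y - x)⁻¹ * ((-1 : K) ^ (A+1 - (A+1)) * ((A+1 + B - (A+1) - 1).choose (A+1 - (A+1)) : K)
            * (y - x)⁻¹ ^ (A+1 + B - (A+1)) * x⁻¹ ^ (A+1)) := by
      rw [show A+1 + (B+1) - (A+1) = B + 1 by omega, show A+1 + B - (A+1) = B by omega,
        Nat.sub_self]
      simp [Nat.choose_zero_right, pow_succ]
      ring
    have hT1 :
        (∑ i ∈ Icc 1 (A+1), (-1 : K) ^ (A+1 - i) * ((A+1 + (B+1) - i - 1).choose (A+1 - i) : K)
            * (y - x)⁻¹ ^ (A+1 + (B+1) - i) * x⁻¹ ^ i)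
        = (y - x)⁻¹ * (∑ i ∈ Icc 1 (A+1), (-1 : K) ^ (A+1 - i)
              * ((A+1 + B - i - 1).choose (A+1 - i) : K)
              * (y - x)⁻¹ ^ (A+1 + B - i) * x⁻¹ ^ i)
          - (y - x)⁻¹ * (∑ i ∈ Icc 1 A, (-1 : K) ^ (A - i)
              * ((A + (B+1) - i - 1).choose (A - i) : K)
              * (y - x)⁻¹ ^ (A + (B+1) - i) * x⁻¹ ^ i) := by
      rw [mul_sum, mul_sum, Finset.sum_Icc_succ_top (by omega : 1 ≤ A+1),
        Finset.sum_Icc_succ_top (by omega : 1 ≤ A+1),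
        Finset.sum_congr rfl perterm1, Finset.sum_sub_distrib, hend1]
      ring
    have perterm2 : ∀ j ∈ Icc 1 B,
        (-1 : K) ^ (A+1) * ((A+1 + (B+1) - j - 1).choose (B+1 - j) : K)
            * (y - x)⁻¹ ^ (A+1 + (B+1) - j) * y⁻¹ ^ j
        = (y - x)⁻¹ * ((-1 : K) ^ (A+1) * ((A+1 + B - j - 1).choose (B - j) : K)
            * (y - x)⁻¹ ^ (A+1 + B - j) * y⁻¹ ^ j)
          - (y - x)⁻¹ * ((-1 : K) ^ A * ((A + (B+1) - j - 1).choose (B+1 - j) : K)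
            * (y - x)⁻¹ ^ (A + (B+1) - j) * y⁻¹ ^ j) := by
      intro j hj
      rw [mem_Icc] at hj
      have e1 : A+1 + (B+1) - j - 1 = (A + B - j) + 1 := by omega
      have e2 : B+1 - j = (B - j) + 1 := by omega
      have e3 : A+1 + B - j - 1 = A + B - j := by omega
      have e4 : A + (B+1) - j - 1 = A + B - j := by omega
      have e6 : A+1 + (B+1) - j = (A+1 + B - j) + 1 := by omega
      have e7 : A + (B+1) - j = A+1 + B - j := by omega
      rw [e1, e2, Nat.choose_succ_succ, e3, e4, e6, e7]
      push_cast
      ring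
    have hend2 : (-1 : K) ^ (A+1) * ((A+1 + (B+1) - (B+1) - 1).choose (B+1 - (B+1)) : K)
            * (y - x)⁻¹ ^ (A+1 + (B+1) - (B+1)) * y⁻¹ ^ (B+1)
        = - ((y - x)⁻¹ * ((-1 : K) ^ A * ((A + (B+1) - (B+1) - 1).choose (B+1 - (B+1)) : K)
            * (y - x)⁻¹ ^ (A + (B+1) - (B+1)) * y⁻¹ ^ (B+1))) := by
      rw [show A+1 + (B+1) - (B+1) = A + 1 by omega, show A + (B+1) - (B+1) = A by omega,
        Nat.sub_self]
      simp [Nat.choose_zero_right, pow_succ]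
      ring
    have hT2 :
        (∑ j ∈ Icc 1 (B+1), (-1 : K) ^ (A+1) * ((A+1 + (B+1) - j - 1).choose (B+1 - j) : K)
            * (y - x)⁻¹ ^ (A+1 + (B+1) - j) * y⁻¹ ^ j)
        = (y - x)⁻¹ * (∑ j ∈ Icc 1 B, (-1 : K) ^ (A+1)
              * ((A+1 + B - j - 1).choose (B - j) : K)
              * (y - x)⁻¹ ^ (A+1 + B - j) * y⁻¹ ^ j)
          - (y - x)⁻¹ * (∑ j ∈ Icc 1 (B+1), (-1 : K) ^ A
              * ((A + (B+1) - j - 1).choose (B+1 - j) : K)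
              * (y - x)⁻¹ ^ (A + (B+1) - j) * y⁻¹ ^ j) := by
      rw [mul_sum, mul_sum, Finset.sum_Icc_succ_top (by omega : 1 ≤ B+1),
        Finset.sum_Icc_succ_top (by omega : 1 ≤ B+1),
        Finset.sum_congr rfl perterm2, Finset.sum_sub_distrib, hend2]
      ring
    rw [key, ka, kb]
    linear_combination -hT1 - hT2

section Aux

variable (Fq : Type) [Field Fq] [Fintype Fq] [DecidableEq Fq]

/-- The "lower part" polynomial with coefficient vector δ. -/
noncomputable def lowPoly {d : ℕ} (δ : Fin d → Fq) : Fq[X] :=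
  ∑ j : Fin d, C (δ j) * X ^ (j : ℕ)

variable {Fq}

lemma lowPoly_coeff {d : ℕ} (δ : Fin d → Fq) (k : ℕ) :
    (lowPoly Fq δ).coeff k = if h : k < d then δ ⟨k, h⟩ else 0 := by
  rw [lowPoly, finset_sum_coeff]
  simp only [coeff_C_mul_X_pow]
  split
  · next h =>
    rw [Finset.sum_eq_single (⟨k, h⟩ : Fin d)]
    · simp
    · intro j _ hj
      rw [if_neg]
      intro hk
      exact hj (by ext; simp [← hk])
    · simp
  · next h =>
    apply Finset.sum_eq_zero
    intro j _
    rw [if_neg]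
    intro hk
    exact h (hk ▸ j.2)

lemma lowPoly_degree_lt {d : ℕ} (δ : Fin d → Fq) : (lowPoly Fq δ).degree < (d : ℕ) := by
  rw [degree_lt_iff_coeff_zero]
  intro m hm
  rw [lowPoly_coeff, dif_neg (by exact_mod_cast not_lt.2 hm)]

lemma monicOf_eq {d : ℕ} (c : Fin d → Fq) : monicOf Fq d c = X ^ d + lowPoly Fq c := rfl

lemma monicOf_monic {d : ℕ} (c : Fin d → Fq) : (monicOf Fq d c).Monic :=
  monic_X_pow_add (lowPoly_degree_lt c)

lemma monicOf_ne_zero {d : ℕ} (c : Fin d → Fq) : monicOf Fq d c ≠ 0 :=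
  (monicOf_monic c).ne_zero

lemma lowPoly_sub {d : ℕ} (δ₁ δ₂ : Fin d → Fq) :
    lowPoly Fq (δ₁ - δ₂) = lowPoly Fq δ₁ - lowPoly Fq δ₂ := by
  rw [lowPoly, lowPoly, lowPoly, ← Finset.sum_sub_distrib]
  congr 1; funext j
  rw [Pi.sub_apply, map_sub, sub_mul]

lemma lowPoly_eq_zero_iff {d : ℕ} (δ : Fin d → Fq) : lowPoly Fq δ = 0 ↔ δ = 0 := by
  constructor
  · intro h
    funext j
    have := lowPoly_coeff δ (j : ℕ)
    rw [h, coeff_zero, dif_pos j.2] at this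
    simpa using this.symm
  · rintro rfl
    simp [lowPoly]

lemma monicOf_sub {d : ℕ} (c₁ c₂ : Fin d → Fq) :
    monicOf Fq d c₁ - monicOf Fq d c₂ = lowPoly Fq (c₁ - c₂) := by
  rw [monicOf_eq, monicOf_eq, lowPoly_sub]; ring

lemma Slt_cons (a : ℕ) (rest : List ℕ) (d : ℕ) :
    Slt Fq (a :: rest) d = ∑ i ∈ Finset.range d, ∑ c : Fin i → Fq,
        ((algebraMap Fq[X] (RatFunc Fq) (monicOf Fq i c))⁻¹) ^ a * Slt Fq rest i := rfl

lemma Slt_nil (d : ℕ) : Slt Fq [] d = 1 := rfl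

/-- The top-degree part of a depth-one power sum. -/
noncomputable def Stop (Fq : Type) [Field Fq] [Fintype Fq] (d k : ℕ) : RatFunc Fq :=
  ∑ c : Fin d → Fq, ((algebraMap Fq[X] (RatFunc Fq) (monicOf Fq d c))⁻¹) ^ k

/-- Sum over all short coefficient vectors (nonzero ones give nonzero polys of degree < d). -/
noncomputable def Usum (Fq : Type) [Field Fq] [Fintype Fq] (d k : ℕ) : RatFunc Fq :=
  ∑ δ : Fin d → Fq, ((algebraMap Fq[X] (RatFunc Fq) (lowPoly Fq δ))⁻¹) ^ k

lemma Sd_single (a d : ℕ) : Sd Fq [a] d = Stop Fq d a := by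
  rw [Sd, Slt_cons, Slt_cons, Finset.sum_range_succ, Stop]
  simp [Slt_nil]

lemma Sd_pair (i j d : ℕ) : Sd Fq [i, j] d = Stop Fq d i * Slt Fq [j] d := by
  rw [Sd, Slt_cons, Slt_cons, Finset.sum_range_succ, Stop, ← Finset.sum_mul]
  ring

lemma lowPoly_snoc {d : ℕ} (c : Fin d → Fq) (v : Fq) :
    lowPoly Fq (Fin.snoc c v) = lowPoly Fq c + C v * X ^ d := by
  rw [lowPoly, Fin.sum_univ_castSucc]
  simp [Fin.snoc_castSucc, Fin.snoc_last, lowPoly]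

lemma lowPoly_smul {d : ℕ} (v : Fq) (c : Fin d → Fq) :
    lowPoly Fq (v • c) = C v * lowPoly Fq c := by
  simp [lowPoly, Finset.mul_sum, map_mul, mul_assoc]

lemma lowPoly_snoc_ne {d : ℕ} (c : Fin d → Fq) (v : Fq) (hv : v ≠ 0) :
    lowPoly Fq (Fin.snoc c v) = C v * monicOf Fq d (v⁻¹ • c) := by
  rw [lowPoly_snoc, monicOf, mul_add, ← lowPoly, ← lowPoly_smul, smul_smul,
    mul_inv_cancel₀ hv, one_smul]
  ring

lemma sum_units_erase {M : Type*} [AddCommMonoid M] (g : Fq → M) :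
    ∑ v ∈ Finset.univ.erase (0 : Fq), g v = ∑ u : Fqˣ, g u := by
  rw [Finset.sum_subtype (p := fun v : Fq => v ≠ 0) _ (by simp) g]
  exact (Fintype.sum_equiv unitsEquivNeZero (fun u : Fqˣ => g (u : Fq))
    (fun x : {a : Fq // a ≠ 0} => g (x : Fq)) (fun u => rfl)).symm

/-- Decomposition of nonzero polynomials of degree `< d` as a unit times a monic. -/
lemma sum_nonzero_decomp {M : Type*} [AddCommMonoid M] (d : ℕ) (φ : Fq[X] → M)
    (hφ : φ 0 = 0) :
    ∑ δ : Fin d → Fq, φ (lowPoly Fq δ)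
      = ∑ e ∈ Finset.range d, ∑ u : Fqˣ, ∑ c : Fin e → Fq, φ (C (u : Fq) * monicOf Fq e c) := by
  induction d with
  | zero =>
    rw [Finset.range_zero, Finset.sum_empty]
    rw [Fintype.sum_eq_single (0 : Fin 0 → Fq) (fun x hx => absurd (Subsingleton.elim x 0) hx)]
    simp [lowPoly, hφ]
  | succ d ih =>
    rw [← Fintype.sum_equiv (Fin.snocEquiv (fun _ => Fq)) _
      (fun δ => φ (lowPoly Fq δ)) (fun p => rfl)]
    rw [Fintype.sum_prod_type]
    rw [← Finset.add_sum_erase _ _ (Finset.mem_univ (0 : Fq))]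
    have h0 : ∑ c : Fin d → Fq, φ (lowPoly Fq (Fin.snocEquiv (fun _ => Fq) (0, c)))
        = ∑ e ∈ Finset.range d, ∑ u : Fqˣ, ∑ c : Fin e → Fq,
            φ (C (u : Fq) * monicOf Fq e c) := by
      rw [← ih]
      apply Finset.sum_congr rfl
      intro c _
      congr 1
      show lowPoly Fq (Fin.snoc c 0) = lowPoly Fq c
      rw [lowPoly_snoc]
      simp
    rw [h0, Finset.sum_range_succ]
    congr 1
    rw [sum_units_erase
      (fun v => ∑ c : Fin d → Fq, φ (lowPoly Fq (Fin.snocEquiv (fun _ => Fq) (v, c))))]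
    apply Finset.sum_congr rfl
    intro u _
    have hstep : ∀ c : Fin d → Fq,
        φ (C (u : Fq) * monicOf Fq d c)
          = φ (lowPoly Fq (Fin.snocEquiv (fun _ => Fq) ((u : Fq), u • c))) := by
      intro c
      congr 1
      show C (u : Fq) * monicOf Fq d c = lowPoly Fq (Fin.snoc (u • c) (u : Fq))
      have hc : ((u : Fq))⁻¹ • (u • c) = c := by
        funext j
        simp [Units.smul_def, inv_mul_cancel_left₀ u.ne_zero]
      rw [lowPoly_snoc_ne _ _ u.ne_zero, hc]
    exact (Fintype.sum_bijective _ (MulAction.bijective u) _ _ hstep).symm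

lemma units_inv_pow_sum (k : ℕ) :
    ∑ u : Fqˣ, (algebraMap Fq (RatFunc Fq) (((u : Fq))⁻¹)) ^ k
      = if (Fintype.card Fq - 1) ∣ k then (-1 : RatFunc Fq) else 0 := by
  have h1 : ∑ u : Fqˣ, (((u : Fq))⁻¹) ^ k = ∑ u : Fqˣ, ((u : Fq)) ^ k := by
    apply Fintype.sum_equiv (Equiv.inv Fqˣ)
    intro u
    simp
  have h2 : ∑ u : Fqˣ, ((u : Fq)) ^ k = if (Fintype.card Fq - 1) ∣ k then (-1 : Fq) else 0 := by
    have := FiniteField.sum_pow_units Fq k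
    simpa using this
  calc ∑ u : Fqˣ, (algebraMap Fq (RatFunc Fq) (((u : Fq))⁻¹)) ^ k
      = algebraMap Fq (RatFunc Fq) (∑ u : Fqˣ, (((u : Fq))⁻¹) ^ k) := by
        rw [map_sum]
        apply Finset.sum_congr rfl
        intro u _
        rw [map_pow]
    _ = algebraMap Fq (RatFunc Fq) (if (Fintype.card Fq - 1) ∣ k then (-1 : Fq) else 0) := by
        rw [h1, h2]
    _ = if (Fintype.card Fq - 1) ∣ k then (-1 : RatFunc Fq) else 0 := by
        split_ifs <;> simp

lemma Usum_eq (d k : ℕ) (hk : k ≠ 0) :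
    Usum Fq d k
      = (if (Fintype.card Fq - 1) ∣ k then (-1 : RatFunc Fq) else 0) * Slt Fq [k] d := by
  rw [Usum, sum_nonzero_decomp d
      (fun h => ((algebraMap Fq[X] (RatFunc Fq) h)⁻¹) ^ k) (by simp [zero_pow hk]),
    Slt_cons, Finset.mul_sum]
  apply Finset.sum_congr rfl
  intro e _
  rw [Finset.mul_sum, Finset.sum_comm]
  apply Finset.sum_congr rfl
  intro c _
  have hsplit : ∀ u : Fqˣ,
      ((algebraMap Fq[X] (RatFunc Fq) (C (u : Fq) * monicOf Fq e c))⁻¹) ^ k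
        = (algebraMap Fq (RatFunc Fq) (((u : Fq))⁻¹)) ^ k
            * ((algebraMap Fq[X] (RatFunc Fq) (monicOf Fq e c))⁻¹) ^ k := by
    intro u
    have hCu : algebraMap Fq[X] (RatFunc Fq) (C (u : Fq)) = algebraMap Fq (RatFunc Fq) (u : Fq) := by
      rw [← Polynomial.algebraMap_eq, ← IsScalarTower.algebraMap_apply]
    rw [map_mul, mul_inv, mul_pow, hCu, map_inv₀]
  rw [Finset.sum_congr rfl (fun u _ => hsplit u), ← Finset.sum_mul, units_inv_pow_sum]
  rw [Slt_nil, mul_one]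

lemma neg_one_pow_eq_one_of_dvd (p : ℕ) [Fact p.Prime] [CharP Fq p] {j : ℕ}
    (hj : (Fintype.card Fq - 1) ∣ j) : ((-1 : RatFunc Fq)) ^ j = 1 := by
  obtain ⟨n, hp, hcard⟩ := FiniteField.card Fq p
  by_cases h2 : p = 2
  · subst h2
    haveI : CharP (RatFunc Fq) 2 := ratFuncCharP Fq 2
    rw [CharTwo.neg_eq (1 : RatFunc Fq), one_pow]
  · have hodd : Odd (Fintype.card Fq) := by
      rw [hcard]
      exact (hp.odd_of_ne_two h2).pow
    have heven : Even (Fintype.card Fq - 1) := Nat.Odd.sub_odd hodd odd_one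
    obtain ⟨t, rfl⟩ := hj
    exact Even.neg_one_pow (heven.mul_right t)

end Aux

/-- For every `d ≥ 0` and `a, b ∈ ℕ`:
`S_d(a) S_d(b) = S_d(a+b) + ∑_{i+j=a+b, i,j≥1, (q-1)∣j} Δ^{i,j}_{a,b} S_d(i,j)` in `K`. -/
theorem powerSum_product (Fq : Type) [Field Fq] [Fintype Fq]
    (p : ℕ) [Fact p.Prime] [CharP Fq p]
    (d : ℕ) (a b : ℕ) (ha : 0 < a) (hb : 0 < b) :
    Sd Fq [a] d * Sd Fq [b] d =
      Sd Fq [a + b] d +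
        ∑ j ∈ Finset.Ioo 0 (a + b),
          if (Fintype.card Fq - 1) ∣ j then
            ZMod.castHom (dvd_refl p) (RatFunc Fq) (Del p a b (a + b - j) j) *
              Sd Fq [a + b - j, j] d
          else 0 := by
  classical
  have hKne : ∀ c : Fin d → Fq, algebraMap Fq[X] (RatFunc Fq) (monicOf Fq d c) ≠ 0 :=
    fun c => RatFunc.algebraMap_ne_zero (monicOf_ne_zero c)
  -- diagonal/off-diagonal split of the product
  have hprod : Stop Fq d a * Stop Fq d b
      = Stop Fq d (a + b) + ∑ c1 : Fin d → Fq, ∑ c2 ∈ Finset.univ.erase c1,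
          ((algebraMap Fq[X] (RatFunc Fq) (monicOf Fq d c1))⁻¹) ^ a
            * ((algebraMap Fq[X] (RatFunc Fq) (monicOf Fq d c2))⁻¹) ^ b := by
    rw [Stop, Stop, Stop, Finset.sum_mul_sum, ← Finset.sum_add_distrib]
    apply Finset.sum_congr rfl
    intro c1 _
    rw [← Finset.add_sum_erase _ _ (Finset.mem_univ c1)]
    congr 1
    rw [pow_add]
  -- pointwise partial fraction expansion
  have hPF : ∀ c1 c2 : Fin d → Fq, c2 ≠ c1 →
      ((algebraMap Fq[X] (RatFunc Fq) (monicOf Fq d c1))⁻¹) ^ a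
          * ((algebraMap Fq[X] (RatFunc Fq) (monicOf Fq d c2))⁻¹) ^ b
        = (∑ i ∈ Finset.Icc 1 a, (-1 : RatFunc Fq) ^ (a - i)
              * ((a + b - i - 1).choose (a - i) : RatFunc Fq)
              * ((algebraMap Fq[X] (RatFunc Fq) (lowPoly Fq (c2 - c1)))⁻¹) ^ (a + b - i)
              * ((algebraMap Fq[X] (RatFunc Fq) (monicOf Fq d c1))⁻¹) ^ i)
          + ∑ j ∈ Finset.Icc 1 b, (-1 : RatFunc Fq) ^ a
              * ((a + b - j - 1).choose (b - j) : RatFunc Fq)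
              * ((algebraMap Fq[X] (RatFunc Fq) (lowPoly Fq (c2 - c1)))⁻¹) ^ (a + b - j)
              * ((algebraMap Fq[X] (RatFunc Fq) (monicOf Fq d c2))⁻¹) ^ j := by
    intro c1 c2 hne
    have hyx : algebraMap Fq[X] (RatFunc Fq) (monicOf Fq d c2)
        - algebraMap Fq[X] (RatFunc Fq) (monicOf Fq d c1)
        = algebraMap Fq[X] (RatFunc Fq) (lowPoly Fq (c2 - c1)) := by
      rw [← map_sub, monicOf_sub]
    have hlp : algebraMap Fq[X] (RatFunc Fq) (lowPoly Fq (c2 - c1)) ≠ 0 :=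
      RatFunc.algebraMap_ne_zero
        (by rw [Ne, lowPoly_eq_zero_iff]; exact fun hh => hne (by rwa [sub_eq_zero] at hh))
    have hres := PFaux (a + b - 1) a b (by omega)
      (algebraMap Fq[X] (RatFunc Fq) (monicOf Fq d c1))
      (algebraMap Fq[X] (RatFunc Fq) (monicOf Fq d c2))
      (hKne c1) (hKne c2) (by rw [hyx]; exact hlp)
    rw [hyx] at hres
    exact hres
  -- the inner sums over differences
  have hU : ∀ (c1 : Fin d → Fq) (k : ℕ), k ≠ 0 →
      ∑ c2 ∈ Finset.univ.erase c1,
        ((algebraMap Fq[X] (RatFunc Fq) (lowPoly Fq (c2 - c1)))⁻¹) ^ k = Usum Fq d k := by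
    intro c1 k hk
    have h0 : ((algebraMap Fq[X] (RatFunc Fq) (lowPoly Fq (0 : Fin d → Fq)))⁻¹) ^ k = 0 := by
      rw [(lowPoly_eq_zero_iff (0 : Fin d → Fq)).2 rfl, map_zero, inv_zero, zero_pow hk]
    rw [Usum, ← Finset.add_sum_erase _ _ (Finset.mem_univ (0 : Fin d → Fq)), h0, zero_add]
    refine Finset.sum_bij' (fun c2 _ => c2 - c1) (fun δ _ => δ + c1) ?_ ?_ ?_ ?_ ?_
    · intro c2 hc2
      rw [Finset.mem_erase] at hc2 ⊢
      exact ⟨sub_ne_zero_of_ne hc2.1, Finset.mem_univ _⟩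
    · intro δ hδ
      rw [Finset.mem_erase] at hδ ⊢
      exact ⟨fun hcon => hδ.1 (by have := hcon; simpa using this), Finset.mem_univ _⟩
    · intro c2 _
      show c2 - c1 + c1 = c2
      abel
    · intro δ _
      show δ + c1 - c1 = δ
      abel
    · intro c2 _
      rfl
  have hU' : ∀ (c2 : Fin d → Fq) (k : ℕ), k ≠ 0 →
      ∑ c1 ∈ Finset.univ.erase c2,
        ((algebraMap Fq[X] (RatFunc Fq) (lowPoly Fq (c2 - c1)))⁻¹) ^ k = Usum Fq d k := by
    intro c2 k hk
    have h0 : ((algebraMap Fq[X] (RatFunc Fq) (lowPoly Fq (0 : Fin d → Fq)))⁻¹) ^ k = 0 := by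
      rw [(lowPoly_eq_zero_iff (0 : Fin d → Fq)).2 rfl, map_zero, inv_zero, zero_pow hk]
    rw [Usum, ← Finset.add_sum_erase _ _ (Finset.mem_univ (0 : Fin d → Fq)), h0, zero_add]
    refine Finset.sum_bij' (fun c1 _ => c2 - c1) (fun δ _ => c2 - δ) ?_ ?_ ?_ ?_ ?_
    · intro c1 hc1
      rw [Finset.mem_erase] at hc1 ⊢
      exact ⟨sub_ne_zero_of_ne (fun hh => hc1.1 hh.symm), Finset.mem_univ _⟩
    · intro δ hδ
      rw [Finset.mem_erase] at hδ ⊢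
      exact ⟨fun hcon => hδ.1 (by have := hcon; simpa [sub_eq_iff_eq_add] using this),
        Finset.mem_univ _⟩
    · intro c1 _
      show c2 - (c2 - c1) = c1
      abel
    · intro δ _
      show c2 - (c2 - δ) = δ
      abel
    · intro c1 _
      rfl
  -- first family
  have hfam1 : (∑ c1 : Fin d → Fq, ∑ c2 ∈ Finset.univ.erase c1,
        ∑ i ∈ Finset.Icc 1 a, (-1 : RatFunc Fq) ^ (a - i)
          * ((a + b - i - 1).choose (a - i) : RatFunc Fq)
          * ((algebraMap Fq[X] (RatFunc Fq) (lowPoly Fq (c2 - c1)))⁻¹) ^ (a + b - i)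
          * ((algebraMap Fq[X] (RatFunc Fq) (monicOf Fq d c1))⁻¹) ^ i)
      = ∑ i ∈ Finset.Icc 1 a, (-1 : RatFunc Fq) ^ (a - i)
          * ((a + b - i - 1).choose (a - i) : RatFunc Fq)
          * (Usum Fq d (a + b - i) * Stop Fq d i) := by
    calc (∑ c1 : Fin d → Fq, ∑ c2 ∈ Finset.univ.erase c1, ∑ i ∈ Finset.Icc 1 a,
            (-1 : RatFunc Fq) ^ (a - i) * ((a + b - i - 1).choose (a - i) : RatFunc Fq)
            * ((algebraMap Fq[X] (RatFunc Fq) (lowPoly Fq (c2 - c1)))⁻¹) ^ (a + b - i)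
            * ((algebraMap Fq[X] (RatFunc Fq) (monicOf Fq d c1))⁻¹) ^ i)
        = ∑ i ∈ Finset.Icc 1 a, ∑ c1 : Fin d → Fq, ∑ c2 ∈ Finset.univ.erase c1,
            (-1 : RatFunc Fq) ^ (a - i) * ((a + b - i - 1).choose (a - i) : RatFunc Fq)
            * ((algebraMap Fq[X] (RatFunc Fq) (lowPoly Fq (c2 - c1)))⁻¹) ^ (a + b - i)
            * ((algebraMap Fq[X] (RatFunc Fq) (monicOf Fq d c1))⁻¹) ^ i := by
          rw [Finset.sum_congr rfl (fun c1 _ => Finset.sum_comm), Finset.sum_comm]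
      _ = _ := by
          apply Finset.sum_congr rfl
          intro i hi
          rw [Finset.mem_Icc] at hi
          have hk : a + b - i ≠ 0 := by omega
          have inner : ∀ c1 : Fin d → Fq, ∑ c2 ∈ Finset.univ.erase c1,
              ((-1 : RatFunc Fq) ^ (a - i) * ((a + b - i - 1).choose (a - i) : RatFunc Fq)
              * ((algebraMap Fq[X] (RatFunc Fq) (lowPoly Fq (c2 - c1)))⁻¹) ^ (a + b - i)
              * ((algebraMap Fq[X] (RatFunc Fq) (monicOf Fq d c1))⁻¹) ^ i)
              = ((-1 : RatFunc Fq) ^ (a - i) * ((a + b - i - 1).choose (a - i) : RatFunc Fq)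
                  * Usum Fq d (a + b - i))
                * ((algebraMap Fq[X] (RatFunc Fq) (monicOf Fq d c1))⁻¹) ^ i := by
            intro c1
            rw [← Finset.sum_mul, ← Finset.mul_sum, hU c1 _ hk]
          rw [Finset.sum_congr rfl (fun c1 _ => inner c1), ← Finset.mul_sum, Stop]
          ring
  -- second family
  have hfam2 : (∑ c1 : Fin d → Fq, ∑ c2 ∈ Finset.univ.erase c1,
        ∑ j ∈ Finset.Icc 1 b, (-1 : RatFunc Fq) ^ a
          * ((a + b - j - 1).choose (b - j) : RatFunc Fq)
          * ((algebraMap Fq[X] (RatFunc Fq) (lowPoly Fq (c2 - c1)))⁻¹) ^ (a + b - j)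
          * ((algebraMap Fq[X] (RatFunc Fq) (monicOf Fq d c2))⁻¹) ^ j)
      = ∑ j ∈ Finset.Icc 1 b, (-1 : RatFunc Fq) ^ a
          * ((a + b - j - 1).choose (b - j) : RatFunc Fq)
          * (Usum Fq d (a + b - j) * Stop Fq d j) := by
    have hswap : (∑ c1 : Fin d → Fq, ∑ c2 ∈ Finset.univ.erase c1,
          ∑ j ∈ Finset.Icc 1 b, (-1 : RatFunc Fq) ^ a
            * ((a + b - j - 1).choose (b - j) : RatFunc Fq)
            * ((algebraMap Fq[X] (RatFunc Fq) (lowPoly Fq (c2 - c1)))⁻¹) ^ (a + b - j)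
            * ((algebraMap Fq[X] (RatFunc Fq) (monicOf Fq d c2))⁻¹) ^ j)
        = ∑ c2 : Fin d → Fq, ∑ c1 ∈ Finset.univ.erase c2,
          ∑ j ∈ Finset.Icc 1 b, (-1 : RatFunc Fq) ^ a
            * ((a + b - j - 1).choose (b - j) : RatFunc Fq)
            * ((algebraMap Fq[X] (RatFunc Fq) (lowPoly Fq (c2 - c1)))⁻¹) ^ (a + b - j)
            * ((algebraMap Fq[X] (RatFunc Fq) (monicOf Fq d c2))⁻¹) ^ j :=
      Finset.sum_comm' (by
        intro x y
        simp only [Finset.mem_univ, Finset.mem_erase, true_and, and_true]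
        exact ne_comm)
    rw [hswap]
    calc (∑ c2 : Fin d → Fq, ∑ c1 ∈ Finset.univ.erase c2, ∑ j ∈ Finset.Icc 1 b,
            (-1 : RatFunc Fq) ^ a * ((a + b - j - 1).choose (b - j) : RatFunc Fq)
            * ((algebraMap Fq[X] (RatFunc Fq) (lowPoly Fq (c2 - c1)))⁻¹) ^ (a + b - j)
            * ((algebraMap Fq[X] (RatFunc Fq) (monicOf Fq d c2))⁻¹) ^ j)
        = ∑ j ∈ Finset.Icc 1 b, ∑ c2 : Fin d → Fq, ∑ c1 ∈ Finset.univ.erase c2,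
            (-1 : RatFunc Fq) ^ a * ((a + b - j - 1).choose (b - j) : RatFunc Fq)
            * ((algebraMap Fq[X] (RatFunc Fq) (lowPoly Fq (c2 - c1)))⁻¹) ^ (a + b - j)
            * ((algebraMap Fq[X] (RatFunc Fq) (monicOf Fq d c2))⁻¹) ^ j := by
          rw [Finset.sum_congr rfl (fun c2 _ => Finset.sum_comm), Finset.sum_comm]
      _ = _ := by
          apply Finset.sum_congr rfl
          intro j hj
          rw [Finset.mem_Icc] at hj
          have hk : a + b - j ≠ 0 := by omega
          have inner : ∀ c2 : Fin d → Fq, ∑ c1 ∈ Finset.univ.erase c2,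
              ((-1 : RatFunc Fq) ^ a * ((a + b - j - 1).choose (b - j) : RatFunc Fq)
              * ((algebraMap Fq[X] (RatFunc Fq) (lowPoly Fq (c2 - c1)))⁻¹) ^ (a + b - j)
              * ((algebraMap Fq[X] (RatFunc Fq) (monicOf Fq d c2))⁻¹) ^ j)
              = ((-1 : RatFunc Fq) ^ a * ((a + b - j - 1).choose (b - j) : RatFunc Fq)
                  * Usum Fq d (a + b - j))
                * ((algebraMap Fq[X] (RatFunc Fq) (monicOf Fq d c2))⁻¹) ^ j := by
            intro c2
            rw [← Finset.sum_mul, ← Finset.mul_sum, hU' c2 _ hk]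
          rw [Finset.sum_congr rfl (fun c2 _ => inner c2), ← Finset.mul_sum, Stop]
          ring
  -- the first family, reindexed over j = a+b-i
  have hA1 : (∑ i ∈ Finset.Icc 1 a, (-1 : RatFunc Fq) ^ (a - i)
        * ((a + b - i - 1).choose (a - i) : RatFunc Fq)
        * (Usum Fq d (a + b - i) * Stop Fq d i))
      = ∑ j ∈ Finset.Ioo 0 (a + b),
          if (Fintype.card Fq - 1) ∣ j then
            (-1 : RatFunc Fq) ^ (b - 1) * ((j - 1).choose (b - 1) : RatFunc Fq)
              * (Stop Fq d (a + b - j) * Slt Fq [j] d)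
          else 0 := by
    have step1 : ∀ i ∈ Finset.Icc 1 a,
        (-1 : RatFunc Fq) ^ (a - i) * ((a + b - i - 1).choose (a - i) : RatFunc Fq)
          * (Usum Fq d (a + b - i) * Stop Fq d i)
        = if (Fintype.card Fq - 1) ∣ (a + b - i) then
            (-1 : RatFunc Fq) ^ (b - 1) * (((a + b - i) - 1).choose (b - 1) : RatFunc Fq)
              * (Stop Fq d (a + b - (a + b - i)) * Slt Fq [a + b - i] d)
          else 0 := by
      intro i hi
      rw [Finset.mem_Icc] at hi
      rw [Usum_eq _ _ (by omega : a + b - i ≠ 0)]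
      rw [show a + b - (a + b - i) = i by omega]
      split_ifs with hdvd
      · have hcc : (a + b - i - 1).choose (a - i) = (a + b - i - 1).choose (b - 1) := by
          rw [← Nat.choose_symm (by omega : a - i ≤ a + b - i - 1)]
          congr 1
          omega
        have hE : (-1 : RatFunc Fq) ^ (a + b - i) = 1 := neg_one_pow_eq_one_of_dvd p hdvd
        have h1 : (-1 : RatFunc Fq) ^ (a - i) * (-1) * (-1 : RatFunc Fq) ^ (b - 1) = 1 := by
          calc (-1 : RatFunc Fq) ^ (a - i) * (-1) * (-1 : RatFunc Fq) ^ (b - 1)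
              = (-1 : RatFunc Fq) ^ ((a - i) + 1 + (b - 1)) := by
                rw [pow_add, pow_add, pow_one]
            _ = (-1 : RatFunc Fq) ^ (a + b - i) := by congr 1; omega
            _ = 1 := hE
        have h2 : ((-1 : RatFunc Fq) ^ (b - 1)) * ((-1 : RatFunc Fq) ^ (b - 1)) = 1 := by
          rw [← pow_add]
          exact Even.neg_one_pow ⟨b - 1, rfl⟩
        have hsign : (-1 : RatFunc Fq) ^ (a - i) * (-1) = (-1 : RatFunc Fq) ^ (b - 1) := by
          calc (-1 : RatFunc Fq) ^ (a - i) * (-1)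
              = (-1 : RatFunc Fq) ^ (a - i) * (-1)
                  * (((-1 : RatFunc Fq) ^ (b - 1)) * ((-1 : RatFunc Fq) ^ (b - 1))) := by
                rw [h2, mul_one]
            _ = ((-1 : RatFunc Fq) ^ (a - i) * (-1) * (-1 : RatFunc Fq) ^ (b - 1))
                  * (-1 : RatFunc Fq) ^ (b - 1) := by ring
            _ = (-1 : RatFunc Fq) ^ (b - 1) := by rw [h1, one_mul]
        rw [hcc, show (a + b - i) - 1 = a + b - i - 1 from rfl]
        linear_combination (((a + b - i - 1).choose (b - 1) : RatFunc Fq)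
          * Slt Fq [a + b - i] d * Stop Fq d i) * hsign
      · simp
    calc (∑ i ∈ Finset.Icc 1 a, (-1 : RatFunc Fq) ^ (a - i)
        * ((a + b - i - 1).choose (a - i) : RatFunc Fq)
        * (Usum Fq d (a + b - i) * Stop Fq d i))
        = ∑ i ∈ Finset.Icc 1 a, (if (Fintype.card Fq - 1) ∣ (a + b - i) then
            (-1 : RatFunc Fq) ^ (b - 1) * (((a + b - i) - 1).choose (b - 1) : RatFunc Fq)
              * (Stop Fq d (a + b - (a + b - i)) * Slt Fq [(a + b - i)] d)
          else 0) := Finset.sum_congr rfl step1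
      _ = ∑ j ∈ Finset.Icc b (a + b - 1), (if (Fintype.card Fq - 1) ∣ j then
            (-1 : RatFunc Fq) ^ (b - 1) * ((j - 1).choose (b - 1) : RatFunc Fq)
              * (Stop Fq d (a + b - j) * Slt Fq [j] d)
          else 0) :=
          Finset.sum_bij' (fun i (_ : i ∈ Finset.Icc 1 a) => a + b - i)
            (fun j (_ : j ∈ Finset.Icc b (a + b - 1)) => a + b - j)
            (fun i hi => by simp only [Finset.mem_Icc] at hi ⊢; omega)
            (fun j hj => by simp only [Finset.mem_Icc] at hj ⊢; omega)
            (fun i hi => by simp only [Finset.mem_Icc] at hi; show a + b - (a + b - i) = i; omega)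
            (fun j hj => by simp only [Finset.mem_Icc] at hj; show a + b - (a + b - j) = j; omega)
            (fun i hi => rfl)
      _ = _ := ?_
    apply Finset.sum_subset
    · intro j hj
      rw [Finset.mem_Icc] at hj
      rw [Finset.mem_Ioo]
      omega
    · intro j hj hnot
      rw [Finset.mem_Ioo] at hj
      rw [Finset.mem_Icc] at hnot
      have hjb : j < b := by omega
      have hch : (j - 1).choose (b - 1) = 0 := Nat.choose_eq_zero_of_lt (by omega)
      rw [hch]
      split_ifs <;> simp
  -- the second family, reindexed over j = a+b-j'
  have hA2 : (∑ i ∈ Finset.Icc 1 b, (-1 : RatFunc Fq) ^ a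
        * ((a + b - i - 1).choose (b - i) : RatFunc Fq)
        * (Usum Fq d (a + b - i) * Stop Fq d i))
      = ∑ j ∈ Finset.Ioo 0 (a + b),
          if (Fintype.card Fq - 1) ∣ j then
            (-1 : RatFunc Fq) ^ (a - 1) * ((j - 1).choose (a - 1) : RatFunc Fq)
              * (Stop Fq d (a + b - j) * Slt Fq [j] d)
          else 0 := by
    have step1 : ∀ i ∈ Finset.Icc 1 b,
        (-1 : RatFunc Fq) ^ a * ((a + b - i - 1).choose (b - i) : RatFunc Fq)
          * (Usum Fq d (a + b - i) * Stop Fq d i)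
        = if (Fintype.card Fq - 1) ∣ (a + b - i) then
            (-1 : RatFunc Fq) ^ (a - 1) * (((a + b - i) - 1).choose (a - 1) : RatFunc Fq)
              * (Stop Fq d (a + b - (a + b - i)) * Slt Fq [a + b - i] d)
          else 0 := by
      intro i hi
      rw [Finset.mem_Icc] at hi
      rw [Usum_eq _ _ (by omega : a + b - i ≠ 0)]
      rw [show a + b - (a + b - i) = i by omega]
      split_ifs with hdvd
      · have hcc : (a + b - i - 1).choose (b - i) = (a + b - i - 1).choose (a - 1) := by
          rw [← Nat.choose_symm (by omega : b - i ≤ a + b - i - 1)]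
          congr 1
          omega
        have hsign : (-1 : RatFunc Fq) ^ a * (-1) = (-1 : RatFunc Fq) ^ (a - 1) := by
          calc (-1 : RatFunc Fq) ^ a * (-1) = (-1 : RatFunc Fq) ^ (a + 1) := by rw [pow_succ]
            _ = (-1 : RatFunc Fq) ^ ((a - 1) + 2) := by congr 1; omega
            _ = (-1 : RatFunc Fq) ^ (a - 1) := by rw [pow_add, neg_one_sq, mul_one]
        rw [hcc, show (a + b - i) - 1 = a + b - i - 1 from rfl]
        linear_combination (((a + b - i - 1).choose (a - 1) : RatFunc Fq)
          * Slt Fq [a + b - i] d * Stop Fq d i) * hsign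
      · simp
    calc (∑ i ∈ Finset.Icc 1 b, (-1 : RatFunc Fq) ^ a
        * ((a + b - i - 1).choose (b - i) : RatFunc Fq)
        * (Usum Fq d (a + b - i) * Stop Fq d i))
        = ∑ i ∈ Finset.Icc 1 b, (if (Fintype.card Fq - 1) ∣ (a + b - i) then
            (-1 : RatFunc Fq) ^ (a - 1) * (((a + b - i) - 1).choose (a - 1) : RatFunc Fq)
              * (Stop Fq d (a + b - (a + b - i)) * Slt Fq [(a + b - i)] d)
          else 0) := Finset.sum_congr rfl step1
      _ = ∑ j ∈ Finset.Icc a (a + b - 1), (if (Fintype.card Fq - 1) ∣ j then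
            (-1 : RatFunc Fq) ^ (a - 1) * ((j - 1).choose (a - 1) : RatFunc Fq)
              * (Stop Fq d (a + b - j) * Slt Fq [j] d)
          else 0) :=
          Finset.sum_bij' (fun i (_ : i ∈ Finset.Icc 1 b) => a + b - i)
            (fun j (_ : j ∈ Finset.Icc a (a + b - 1)) => a + b - j)
            (fun i hi => by simp only [Finset.mem_Icc] at hi ⊢; omega)
            (fun j hj => by simp only [Finset.mem_Icc] at hj ⊢; omega)
            (fun i hi => by simp only [Finset.mem_Icc] at hi; show a + b - (a + b - i) = i; omega)
            (fun j hj => by simp only [Finset.mem_Icc] at hj; show a + b - (a + b - j) = j; omega)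
            (fun i hi => rfl)
      _ = _ := ?_
    apply Finset.sum_subset
    · intro j hj
      rw [Finset.mem_Icc] at hj
      rw [Finset.mem_Ioo]
      omega
    · intro j hj hnot
      rw [Finset.mem_Ioo] at hj
      rw [Finset.mem_Icc] at hnot
      have hja : j < a := by omega
      have hch : (j - 1).choose (a - 1) = 0 := Nat.choose_eq_zero_of_lt (by omega)
      rw [hch]
      split_ifs <;> simp
  -- rewrite the right-hand side
  have hRHS : (∑ j ∈ Finset.Ioo 0 (a + b),
        if (Fintype.card Fq - 1) ∣ j then
          ZMod.castHom (dvd_refl p) (RatFunc Fq) (Del p a b (a + b - j) j)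
            * Sd Fq [a + b - j, j] d
        else 0)
      = ∑ j ∈ Finset.Ioo 0 (a + b),
          if (Fintype.card Fq - 1) ∣ j then
            ((-1 : RatFunc Fq) ^ (a - 1) * ((j - 1).choose (a - 1) : RatFunc Fq)
              + (-1 : RatFunc Fq) ^ (b - 1) * ((j - 1).choose (b - 1) : RatFunc Fq))
              * (Stop Fq d (a + b - j) * Slt Fq [j] d)
          else 0 := by
    apply Finset.sum_congr rfl
    intro j _
    split_ifs with hdvd
    · rw [Sd_pair]
      congr 1
      rw [Del, map_add, map_mul, map_mul, map_pow, map_pow, map_neg, map_one,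
        map_natCast, map_natCast]
    · rfl
  -- put everything together
  rw [Sd_single, Sd_single, Sd_single, hprod, hRHS]
  congr 1
  calc (∑ c1 : Fin d → Fq, ∑ c2 ∈ Finset.univ.erase c1,
          ((algebraMap Fq[X] (RatFunc Fq) (monicOf Fq d c1))⁻¹) ^ a
            * ((algebraMap Fq[X] (RatFunc Fq) (monicOf Fq d c2))⁻¹) ^ b)
      = (∑ c1 : Fin d → Fq, ∑ c2 ∈ Finset.univ.erase c1,
          ((∑ i ∈ Finset.Icc 1 a, (-1 : RatFunc Fq) ^ (a - i)
              * ((a + b - i - 1).choose (a - i) : RatFunc Fq)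
              * ((algebraMap Fq[X] (RatFunc Fq) (lowPoly Fq (c2 - c1)))⁻¹) ^ (a + b - i)
              * ((algebraMap Fq[X] (RatFunc Fq) (monicOf Fq d c1))⁻¹) ^ i)
          + ∑ j ∈ Finset.Icc 1 b, (-1 : RatFunc Fq) ^ a
              * ((a + b - j - 1).choose (b - j) : RatFunc Fq)
              * ((algebraMap Fq[X] (RatFunc Fq) (lowPoly Fq (c2 - c1)))⁻¹) ^ (a + b - j)
              * ((algebraMap Fq[X] (RatFunc Fq) (monicOf Fq d c2))⁻¹) ^ j)) := by
        apply Finset.sum_congr rfl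
        intro c1 _
        apply Finset.sum_congr rfl
        intro c2 hc2
        exact hPF c1 c2 (Finset.mem_erase.1 hc2).1
    _ = (∑ c1 : Fin d → Fq, ∑ c2 ∈ Finset.univ.erase c1,
          ∑ i ∈ Finset.Icc 1 a, (-1 : RatFunc Fq) ^ (a - i)
            * ((a + b - i - 1).choose (a - i) : RatFunc Fq)
            * ((algebraMap Fq[X] (RatFunc Fq) (lowPoly Fq (c2 - c1)))⁻¹) ^ (a + b - i)
            * ((algebraMap Fq[X] (RatFunc Fq) (monicOf Fq d c1))⁻¹) ^ i)
        + ∑ c1 : Fin d → Fq, ∑ c2 ∈ Finset.univ.erase c1,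
          ∑ j ∈ Finset.Icc 1 b, (-1 : RatFunc Fq) ^ a
            * ((a + b - j - 1).choose (b - j) : RatFunc Fq)
            * ((algebraMap Fq[X] (RatFunc Fq) (lowPoly Fq (c2 - c1)))⁻¹) ^ (a + b - j)
            * ((algebraMap Fq[X] (RatFunc Fq) (monicOf Fq d c2))⁻¹) ^ j := by
        rw [← Finset.sum_add_distrib]
        apply Finset.sum_congr rfl
        intro c1 _
        rw [← Finset.sum_add_distrib]
    _ = ∑ j ∈ Finset.Ioo 0 (a + b),
          if (Fintype.card Fq - 1) ∣ j then
            ((-1 : RatFunc Fq) ^ (a - 1) * ((j - 1).choose (a - 1) : RatFunc Fq)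
              + (-1 : RatFunc Fq) ^ (b - 1) * ((j - 1).choose (b - 1) : RatFunc Fq))
              * (Stop Fq d (a + b - j) * Slt Fq [j] d)
          else 0 := by
        rw [hfam1, hfam2, hA1, hA2, ← Finset.sum_add_distrib]
        apply Finset.sum_congr rfl
        intro j _
        split_ifs
        · ring
        · simp
end

section
/- For all a, b ∈ ℕ and all (possibly empty) indices 𝔞, 𝔟, the following congruence holds in 𝓔 modulo 𝔄: (y_a e(x_𝔞)) * (y_b e(x_𝔟)) ≡ y_a(e(x_𝔞) * (y_b e(x_𝔟))) + y_b((y_a e(x_𝔞)) * e(x_𝔟)) + y_{a+b}(e(x_𝔞) * e(x_𝔟)) + Σ_{i+j=a+b, (q−1)∣j} Δ^{i,j}_{a,b} y_i((e(x_𝔞) * e(x_𝔟)) * e(x_j)) (mod 𝔄), where e(x_j) = x_j + y_j and y_a(−) denotes left concatenation by the letter y_a extended 𝔽_p-linearly. -/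
/-- A word of the monoid `𝒯` (the free monoid on the letters `x_k, y_ℓ`, `k, ℓ ∈ ℕ+`,
modulo the commutation relations `x_k y_ℓ = y_ℓ x_k`): since every `x`-letter commutes with
every `y`-letter, a word has the unique normal form `x_𝔲 y_𝔳`, and is encoded as the pair
of lists `(𝔲, 𝔳)`. -/
abbrev EWord := List ℕ+ × List ℕ+

/-- The `𝔽_p`-vector space `𝓔` with basis `𝒯`. -/
abbrev ESp (p : ℕ) := EWord →₀ ZMod p

/-- The basis word `x_𝔲 y_𝔳` of `𝓔`. -/
noncomputable def ew (p : ℕ) (z : EWord) : ESp p := Finsupp.single z 1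

/-- Left concatenation by the letter `x_a`, extended `𝔽_p`-linearly. -/
noncomputable def xcons (p : ℕ) (a : ℕ+) (r : ESp p) : ESp p :=
  Finsupp.mapDomain (fun z => (a :: z.1, z.2)) r

/-- Left concatenation by the letter `y_a`, extended `𝔽_p`-linearly. -/
noncomputable def ycons (p : ℕ) (a : ℕ+) (r : ESp p) : ESp p :=
  Finsupp.mapDomain (fun z => (z.1, a :: z.2)) r

/-- `∑_{i+j = a+b, i,j ≥ 1, (q-1) ∣ j} f i j`. -/
noncomputable def decSum {M : Type*} [AddCommMonoid M] (q : ℕ) (a b : ℕ+)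
    (f : ℕ+ → ℕ+ → M) : M :=
  ∑ j ∈ (Finset.Ioo 0 ((a : ℕ) + (b : ℕ))).attach,
    if (q - 1) ∣ (j : ℕ) then
      f ⟨(a : ℕ) + (b : ℕ) - (j : ℕ), by
            have h := Finset.mem_Ioo.mp j.2; omega⟩
        ⟨(j : ℕ), (Finset.mem_Ioo.mp j.2).1⟩
    else 0

/-- Fuelled version of the `q`-shuffle product `*` on `𝓔`, on basis words, following the
inductive definition (induction on the sum of the depths):
(1) `1 * 𝔞 = 𝔞 * 1 = 𝔞`;
(2) `x_𝔞 * y_𝔟 = x_𝔞 y_𝔟 = y_𝔟 x_𝔞 = y_𝔟 * x_𝔞`;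
(3) `x_𝔞 * x_𝔟 = x_{a₁}(x_{𝔞⁽¹⁾} * x_𝔟) + x_{b₁}(x_𝔞 * x_{𝔟⁽¹⁾}) + x_{a₁+b₁}(x_{𝔞⁽¹⁾} * x_{𝔟⁽¹⁾})
     + ∑_{i+j=a₁+b₁, (q-1)∣j} Δ^{i,j}_{a₁,b₁} x_i((x_{𝔞⁽¹⁾} * x_{𝔟⁽¹⁾}) * x_j)`;
(4) `y_𝔞 * y_𝔟 = y_{a₁}(y_{𝔞⁽¹⁾} * y_𝔟) + y_{b₁}(y_𝔞 * y_{𝔟⁽¹⁾}) + y_{a₁+b₁}(y_{𝔞⁽¹⁾} * y_{𝔟⁽¹⁾})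
     + ∑_{i+j=a₁+b₁, (q-1)∣j} Δ^{i,j}_{a₁,b₁} y_i((y_{𝔞⁽¹⁾} * y_{𝔟⁽¹⁾}) * x_j)
     + ∑_{i+j=a₁+b₁, (q-1)∣j} Δ^{i,j}_{a₁,b₁} y_i((y_{𝔞⁽¹⁾} * y_{𝔟⁽¹⁾}) * y_j)`;
(5) `(x_𝔞 y_𝔟) * (x_{𝔞'} y_{𝔟'}) = (x_𝔞 * x_{𝔞'}) * (y_𝔟 * y_{𝔟'})`,
with `*` extended `𝔽_p`-bilinearly.  For sufficient fuel (which `mulE` below always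
supplies) the recursion terminates, since each step strictly decreases the total depth. -/
noncomputable def mulF (p q : ℕ) : ℕ → EWord → EWord → ESp p
  | 0, _, _ => 0
  | _ + 1, ([], []), z => ew p z
  | _ + 1, w, ([], []) => ew p w
  | _ + 1, (u, []), ([], v) => ew p (u, v)
  | _ + 1, ([], v), (u, []) => ew p (u, v)
  | n + 1, (a :: as, []), (b :: bs, []) =>
      xcons p a (mulF p q n (as, []) (b :: bs, [])) +
        xcons p b (mulF p q n (a :: as, []) (bs, [])) +
        xcons p (a + b) (mulF p q n (as, []) (bs, [])) +
        decSum q a b (fun i j =>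
          Del p (a : ℕ) (b : ℕ) (i : ℕ) (j : ℕ) •
            xcons p i ((mulF p q n (as, []) (bs, [])).sum fun w c => c • mulF p q n w ([j], [])))
  | n + 1, ([], a :: as), ([], b :: bs) =>
      ycons p a (mulF p q n ([], as) ([], b :: bs)) +
        ycons p b (mulF p q n ([], a :: as) ([], bs)) +
        ycons p (a + b) (mulF p q n ([], as) ([], bs)) +
        decSum q a b (fun i j =>
          Del p (a : ℕ) (b : ℕ) (i : ℕ) (j : ℕ) •
            ycons p i ((mulF p q n ([], as) ([], bs)).sum fun w c =>
              c • mulF p q n w ([j], []))) +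
        decSum q a b (fun i j =>
          Del p (a : ℕ) (b : ℕ) (i : ℕ) (j : ℕ) •
            ycons p i ((mulF p q n ([], as) ([], bs)).sum fun w c =>
              c • mulF p q n w ([], [j])))
  | n + 1, (u, v), (u', v') =>
      (mulF p q n (u, []) (u', [])).sum fun w c =>
        (mulF p q n ([], v) ([], v')).sum fun z e => (c * e) • mulF p q n w z

/-- The `q`-shuffle product of two basis words of `𝓔`.  The fuel
`2 (|𝔲| + |𝔳| + |𝔲'| + |𝔳'|) + 8` always suffices for the recursion. -/
noncomputable def mulW (p q : ℕ) (w z : EWord) : ESp p :=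
  mulF p q (2 * (w.1.length + w.2.length + z.1.length + z.2.length) + 8) w z

/-- The `q`-shuffle product `*` on `𝓔`, the `𝔽_p`-bilinear extension of `mulW`. -/
noncomputable def mulE (p q : ℕ) (r s : ESp p) : ESp p :=
  r.sum fun w c => s.sum fun z e => (c * e) • mulW p q w z

/-- Membership in the ideal `𝔄` of the (commutative, not necessarily associative)
`𝔽_p`-algebra `(𝓔, *)` generated by all associators `(𝔞*𝔟)*𝔠 - 𝔞*(𝔟*𝔠)`. -/
inductive InA (p q : ℕ) : ESp p → Prop
  | assoc (a b c : ESp p) :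
      InA p q (mulE p q (mulE p q a b) c - mulE p q a (mulE p q b c))
  | zero : InA p q 0
  | add {a b : ESp p} : InA p q a → InA p q b → InA p q (a + b)
  | smul (c : ZMod p) {a : ESp p} : InA p q a → InA p q (c • a)
  | mul_left (x : ESp p) {a : ESp p} : InA p q a → InA p q (mulE p q x a)
  | mul_right (x : ESp p) {a : ESp p} : InA p q a → InA p q (mulE p q a x)

/-- The `𝔽_p`-linear map `e : ℛ → 𝓔` on basis words: for an index `𝔞` of depth `m`,
`e(x_𝔞) = x_𝔞 + ∑_{i=1}^{m} x_{𝔞⁽ⁱ⁾} y_{𝔞₍ᵢ₎}`. -/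
noncomputable def eWord (p : ℕ) (l : List ℕ+) : ESp p :=
  ∑ i ∈ Finset.range (l.length + 1), ew p (l.drop i, l.take i)

section Supported

variable {α β R M : Type*} [Semiring R] [AddCommMonoid M] [Module R M]

theorem Finsupp.mapDomain_mem_supported {s : Set α} {t : Set β} {f : α → β} {r : α →₀ M}
    (hr : r ∈ Finsupp.supported M R s) (hf : Set.MapsTo f s t) :
    r.mapDomain f ∈ Finsupp.supported M R t :=
  Finsupp.supported_comap_lmapDomain M R f t (Finsupp.supported_mono hf hr)

theorem Finsupp.sum_mem_of_mem_supported {N : Type*} [AddCommMonoid N] [Module R N]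
    {s : Set α} {r : α →₀ R} {g : α → R → N} {S : Submodule R N}
    (hr : r ∈ Finsupp.supported R R s) (hg : ∀ w ∈ s, ∀ c, g w c ∈ S) : r.sum g ∈ S :=
  S.finsuppSum_mem _ _ _ fun w hw => hg w (hr (Finsupp.mem_support_iff.2 hw)) _

end Supported

section DecSum

variable {M : Type*} [AddCommMonoid M] {q : ℕ} {a b : ℕ+}

theorem decSum_add (f g : ℕ+ → ℕ+ → M) :
    decSum q a b (fun i j => f i j + g i j) = decSum q a b f + decSum q a b g := by
  simp only [decSum, ← Finset.sum_add_distrib]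
  refine Finset.sum_congr rfl fun _ _ => ?_
  split_ifs <;> simp

theorem map_decSum {N F : Type*} [AddCommMonoid N] [FunLike F M N] [AddMonoidHomClass F M N]
    (φ : F) (f : ℕ+ → ℕ+ → M) :
    φ (decSum q a b f) = decSum q a b (fun i j => φ (f i j)) := by
  simp only [decSum, map_sum]
  refine Finset.sum_congr rfl fun _ _ => ?_
  split_ifs <;> simp

theorem decSum_mem {S : Type*} [SetLike S M] [AddSubmonoidClass S M] {s : S}
    {f : ℕ+ → ℕ+ → M} (h : ∀ i j, f i j ∈ s) : decSum q a b f ∈ s :=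
  sum_mem fun _ _ => by split_ifs; exacts [h _ _, zero_mem s]

theorem smul_decSum {R : Type*} [DistribSMul R M] (c : R) (f : ℕ+ → ℕ+ → M) :
    c • decSum q a b f = decSum q a b (fun i j => c • f i j) :=
  map_decSum (DistribSMul.toAddMonoidHom M c) f

theorem decSum_sub {G : Type*} [AddCommGroup G] (f g : ℕ+ → ℕ+ → G) :
    decSum q a b (fun i j => f i j - g i j) = decSum q a b f - decSum q a b g := by
  simp only [decSum, ← Finset.sum_sub_distrib]
  refine Finset.sum_congr rfl fun _ _ => ?_
  split_ifs <;> simp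

end DecSum

section LinearStructure

variable {p q : ℕ}

noncomputable def yconsₗ (p : ℕ) (a : ℕ+) : ESp p →ₗ[ZMod p] ESp p :=
  Finsupp.lmapDomain (ZMod p) (ZMod p) fun z : EWord => (z.1, a :: z.2)

theorem ycons_add (a : ℕ+) (r s : ESp p) : ycons p a (r + s) = ycons p a r + ycons p a s :=
  map_add (yconsₗ p a) r s

theorem ycons_sub (a : ℕ+) (r s : ESp p) : ycons p a (r - s) = ycons p a r - ycons p a s :=
  map_sub (yconsₗ p a) r s

theorem ycons_smul (a : ℕ+) (c : ZMod p) (r : ESp p) : ycons p a (c • r) = c • ycons p a r :=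
  map_smul (yconsₗ p a) c r

theorem ycons_ew (a : ℕ+) (z : EWord) : ycons p a (ew p z) = ew p (z.1, a :: z.2) :=
  Finsupp.mapDomain_single

noncomputable def mulₗ (p q : ℕ) : ESp p →ₗ[ZMod p] ESp p →ₗ[ZMod p] ESp p :=
  Finsupp.linearCombination (ZMod p) fun w => Finsupp.linearCombination (ZMod p) (mulW p q w)

theorem mulₗ_apply (r s : ESp p) : mulₗ p q r s = mulE p q r s := by
  simp only [mulₗ, mulE, Finsupp.linearCombination_apply, LinearMap.finsupp_sum_apply,
    LinearMap.smul_apply, Finsupp.smul_sum, smul_smul]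

theorem mulE_add_left (r r' s : ESp p) :
    mulE p q (r + r') s = mulE p q r s + mulE p q r' s := by
  simp only [← mulₗ_apply, map_add, LinearMap.add_apply]

theorem mulE_add_right (r s s' : ESp p) :
    mulE p q r (s + s') = mulE p q r s + mulE p q r s' := by
  simp only [← mulₗ_apply, map_add]

theorem mulE_smul_left (c : ZMod p) (r s : ESp p) :
    mulE p q (c • r) s = c • mulE p q r s := by
  simp only [← mulₗ_apply, map_smul, LinearMap.smul_apply]

theorem mulE_smul_right (c : ZMod p) (r s : ESp p) :
    mulE p q r (c • s) = c • mulE p q r s := by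
  simp only [← mulₗ_apply, map_smul]

theorem mulE_ew_ew (w z : EWord) : mulE p q (ew p w) (ew p z) = mulW p q w z := by
  simp [← mulₗ_apply, mulₗ, ew]

theorem mulE_decSum_right (r : ESp p) {a b : ℕ+} (f : ℕ+ → ℕ+ → ESp p) :
    mulE p q r (decSum q a b f) = decSum q a b (fun i j => mulE p q r (f i j)) := by
  simpa only [mulₗ_apply] using map_decSum (mulₗ p q r) f

@[elab_as_elim]
theorem ESp.induction {P : ESp p → Prop} (r : ESp p) (word : ∀ w, P (ew p w))
    (add : ∀ r s, P r → P s → P (r + s)) (smul : ∀ (c : ZMod p) r, P r → P (c • r)) :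
    P r := by
  induction r using Finsupp.induction_linear with
  | zero => simpa using smul 0 _ (word ([], []))
  | add _ _ hr hs => exact add _ _ hr hs
  | single w c => simpa [ew] using smul c _ (word w)

def assocIdeal (p q : ℕ) : Submodule (ZMod p) (ESp p) where
  carrier := {r | InA p q r}
  add_mem' := InA.add
  zero_mem' := InA.zero
  smul_mem' := InA.smul

end LinearStructure

section Support

variable {p q : ℕ}

def depth (w : EWord) : ℕ := w.1.length + w.2.length

abbrev depthLE (p d : ℕ) : Submodule (ZMod p) (ESp p) :=
  Finsupp.supported (ZMod p) (ZMod p) {t : EWord | depth t ≤ d}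

/-- The subspace `ℛ`. -/
abbrev xSubspace (p : ℕ) : Submodule (ZMod p) (ESp p) :=
  Finsupp.supported (ZMod p) (ZMod p) {t : EWord | t.2 = []}

theorem ew_mem_supported {s : Set EWord} {w : EWord} (hw : w ∈ s) :
    ew p w ∈ Finsupp.supported (ZMod p) (ZMod p) s :=
  Finsupp.single_mem_supported _ _ hw

theorem xcons_mem_depthLE {d d' : ℕ} {a : ℕ+} {r : ESp p} (hr : r ∈ depthLE p d)
    (hd : d + 1 ≤ d') : xcons p a r ∈ depthLE p d' :=
  Finsupp.mapDomain_mem_supported hr fun t (ht : depth t ≤ d) => by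
    simp only [Set.mem_ofPred_eq, depth, List.length_cons] at ht ⊢; omega

theorem ycons_mem_depthLE {d d' : ℕ} {a : ℕ+} {r : ESp p} (hr : r ∈ depthLE p d)
    (hd : d + 1 ≤ d') : ycons p a r ∈ depthLE p d' :=
  Finsupp.mapDomain_mem_supported hr fun t (ht : depth t ≤ d) => by
    simp only [Set.mem_ofPred_eq, depth, List.length_cons] at ht ⊢; omega

theorem xcons_mem_xSubspace {a : ℕ+} {r : ESp p} (hr : r ∈ xSubspace p) :
    xcons p a r ∈ xSubspace p :=
  Finsupp.mapDomain_mem_supported hr fun _ ht => ht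

theorem mulF_mem_depthLE (n : ℕ) :
    ∀ (w z : EWord) {d : ℕ}, depth w + depth z ≤ d → mulF p q n w z ∈ depthLE p d := by
  induction n with
  | zero => exact fun _ _ _ _ => zero_mem _
  | succ n ih =>
    rintro ⟨u, v⟩ ⟨u', v'⟩ d hd
    have ih₀ (w z : EWord) : mulF p q n w z ∈ depthLE p (depth w + depth z) := ih w z le_rfl
    have sum_mem {D : ℕ} {r : ESp p} (hr : r ∈ depthLE p D) (z : EWord) :
        (r.sum fun w c => c • mulF p q n w z) ∈ depthLE p (D + depth z) :=
      Finsupp.sum_mem_of_mem_supported hr fun w hw _ =>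
        Submodule.smul_mem _ _ (ih _ _ (Nat.add_le_add_right hw _))
    rcases u with _ | ⟨a, u⟩ <;> rcases v with _ | ⟨b, v⟩ <;>
      rcases u' with _ | ⟨c, u'⟩ <;> rcases v' with _ | ⟨e, v'⟩ <;>
      simp only [mulF, depth, List.length_cons, List.length_nil] at hd ⊢
    all_goals try exact ew_mem_supported (by grind [depth])
    case nil.cons.nil.cons =>
      exact add_mem (add_mem (add_mem (add_mem
        (ycons_mem_depthLE (ih₀ _ _) (by grind [depth]))
        (ycons_mem_depthLE (ih₀ _ _) (by grind [depth])))
        (ycons_mem_depthLE (ih₀ _ _) (by grind [depth])))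
        (decSum_mem fun _ _ => Submodule.smul_mem _ _
          (ycons_mem_depthLE (sum_mem (ih₀ _ _) _) (by grind [depth]))))
        (decSum_mem fun _ _ => Submodule.smul_mem _ _
          (ycons_mem_depthLE (sum_mem (ih₀ _ _) _) (by grind [depth])))
    case cons.nil.cons.nil =>
      exact add_mem (add_mem (add_mem
        (xcons_mem_depthLE (ih₀ _ _) (by grind [depth]))
        (xcons_mem_depthLE (ih₀ _ _) (by grind [depth])))
        (xcons_mem_depthLE (ih₀ _ _) (by grind [depth])))
        (decSum_mem fun _ _ => Submodule.smul_mem _ _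
          (xcons_mem_depthLE (sum_mem (ih₀ _ _) _) (by grind [depth])))
    all_goals
      exact Finsupp.sum_mem_of_mem_supported (ih₀ _ _) fun w (hw : depth w ≤ _) _ =>
        Finsupp.sum_mem_of_mem_supported (ih₀ _ _) fun z (hz : depth z ≤ _) _ =>
          Submodule.smul_mem _ _
            (ih _ _ (by grind [depth]))

theorem mulF_mem_xSubspace (n : ℕ) :
    ∀ u u' : List ℕ+, mulF p q n (u, []) (u', []) ∈ xSubspace p := by
  induction n with
  | zero => exact fun _ _ => zero_mem _
  | succ n ih =>
    rintro (_ | ⟨a, u⟩) (_ | ⟨b, u'⟩) <;> simp only [mulF]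
    iterate 3 exact ew_mem_supported rfl
    refine add_mem (add_mem (add_mem (xcons_mem_xSubspace (ih _ _))
      (xcons_mem_xSubspace (ih _ _))) (xcons_mem_xSubspace (ih _ _)))
      (decSum_mem fun _ _ => Submodule.smul_mem _ _
        (xcons_mem_xSubspace (Finsupp.sum_mem_of_mem_supported (ih _ _) ?_)))
    rintro ⟨w, _⟩ rfl c
    exact Submodule.smul_mem _ _ (ih _ _)

end Support

section Fuel

variable {p q : ℕ}

/-- Fuel sufficient for `mulF` on `w, z`. Rule (5) multiplies words of the full total depth
again, but then always with a pure `x`-word on the left; the cheaper bound for such pairs is what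
makes the recursion decrease. -/
def fuelBound (w z : EWord) : ℕ :=
  if w.2 = [] then depth w + 2 * depth z + 3 else 2 * (depth w + depth z) + 8

theorem one_le_fuelBound (w z : EWord) : 1 ≤ fuelBound w z := by
  unfold fuelBound; split_ifs <;> omega

theorem fuelBound_le (w z : EWord) : fuelBound w z ≤ 2 * (depth w + depth z) + 8 := by
  unfold fuelBound; split_ifs <;> omega

theorem mulF_succ_xx {m : ℕ}
    (ih : ∀ w z, fuelBound w z ≤ m → mulF p q m w z = mulF p q (m + 1) w z)
    (a b : ℕ+) (as bs : List ℕ+) (h : fuelBound (a :: as, []) (b :: bs, []) ≤ m + 1) :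
    mulF p q (m + 1) (a :: as, []) (b :: bs, []) =
      mulF p q (m + 1 + 1) (a :: as, []) (b :: bs, []) := by
  have inner (j : ℕ+) :
      ((mulF p q (m + 1) (as, []) (bs, [])).sum fun w c => c • mulF p q m w ([j], [])) =
        (mulF p q (m + 1) (as, []) (bs, [])).sum fun w c => c • mulF p q (m + 1) w ([j], []) :=
    Finsupp.sum_congr fun w hw => by
      have hd : depth w ≤ _ := mulF_mem_depthLE _ _ _ le_rfl hw
      have hx : w.2 = [] := mulF_mem_xSubspace _ _ _ hw
      rw [ih _ _ (by grind [fuelBound, depth])]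
  simp only [mulF]
  rw [ih (as, []) (b :: bs, []) (by grind [fuelBound, depth]),
    ih (a :: as, []) (bs, []) (by grind [fuelBound, depth]),
    ih (as, []) (bs, []) (by grind [fuelBound, depth])]
  simp only [inner]

theorem mulF_succ_yy {m : ℕ}
    (ih : ∀ w z, fuelBound w z ≤ m → mulF p q m w z = mulF p q (m + 1) w z)
    (a b : ℕ+) (as bs : List ℕ+) (h : fuelBound ([], a :: as) ([], b :: bs) ≤ m + 1) :
    mulF p q (m + 1) ([], a :: as) ([], b :: bs) =
      mulF p q (m + 1 + 1) ([], a :: as) ([], b :: bs) := by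
  replace h : 2 * (as.length + bs.length) + 12 ≤ m + 1 := by grind [fuelBound, depth]
  have inner (z : EWord) (hz : depth z = 1) :
      ((mulF p q (m + 1) ([], as) ([], bs)).sum fun w c => c • mulF p q m w z) =
        (mulF p q (m + 1) ([], as) ([], bs)).sum fun w c => c • mulF p q (m + 1) w z :=
    Finsupp.sum_congr fun w hw => by
      have hd : depth w ≤ _ := mulF_mem_depthLE _ _ _ le_rfl hw
      rw [ih _ _ (le_trans (fuelBound_le _ _) (by grind [depth]))]
  simp only [mulF]
  rw [ih ([], as) ([], b :: bs) (le_trans (fuelBound_le _ _) (by grind [depth])),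
    ih ([], a :: as) ([], bs) (le_trans (fuelBound_le _ _) (by grind [depth])),
    ih ([], as) ([], bs) (le_trans (fuelBound_le _ _) (by grind [depth]))]
  simp only [inner ([_], []) rfl, inner ([], [_]) rfl]

theorem mulF_succ_split_sum {m : ℕ}
    (ih : ∀ w z, fuelBound w z ≤ m → mulF p q m w z = mulF p q (m + 1) w z)
    (u v u' v' : List ℕ+) (hx : 0 < u.length + u'.length) (hy : 0 < v.length + v'.length)
    (hv : v = [] → 0 < u'.length)
    (h : fuelBound (u, v) (u', v') ≤ m + 1) :
    ((mulF p q m (u, []) (u', [])).sum fun w c =>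
        (mulF p q m ([], v) ([], v')).sum fun z e => (c * e) • mulF p q m w z) =
      (mulF p q (m + 1) (u, []) (u', [])).sum fun w c =>
        (mulF p q (m + 1) ([], v) ([], v')).sum fun z e => (c * e) • mulF p q (m + 1) w z := by
  rw [ih (u, []) (u', []) (by grind [fuelBound, depth]),
    ih ([], v) ([], v') (by grind [fuelBound, depth])]
  refine Finsupp.sum_congr fun w hw => Finsupp.sum_congr fun z hz => ?_
  have hwx : w.2 = [] := mulF_mem_xSubspace _ _ _ hw
  have hwd : depth w ≤ _ := mulF_mem_depthLE _ _ _ le_rfl hw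
  have hzd : depth z ≤ _ := mulF_mem_depthLE _ _ _ le_rfl hz
  rw [ih w z (by grind [fuelBound, depth])]

theorem mulF_succ (n : ℕ) :
    ∀ w z : EWord, fuelBound w z ≤ n → mulF p q n w z = mulF p q (n + 1) w z := by
  induction n with
  | zero => exact fun w z h => absurd h (by have := one_le_fuelBound w z; omega)
  | succ m ih =>
    rintro ⟨u, v⟩ ⟨u', v'⟩ h
    rcases u with _ | ⟨a, u⟩ <;> rcases v with _ | ⟨b, v⟩ <;>
      rcases u' with _ | ⟨c, u'⟩ <;> rcases v' with _ | ⟨e, v'⟩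
    all_goals try (simp only [mulF]; done)
    case nil.cons.nil.cons => exact mulF_succ_yy ih _ _ _ _ h
    case cons.nil.cons.nil => exact mulF_succ_xx ih _ _ _ _ h
    all_goals
      simp only [mulF]
      exact mulF_succ_split_sum ih _ _ _ _ (by simp) (by simp) (by simp) h

theorem mulF_eq_mulF {w z : EWord} {n n' : ℕ} (h : fuelBound w z ≤ n)
    (h' : fuelBound w z ≤ n') :
    mulF p q n w z = mulF p q n' w z := by
  have climb (n : ℕ) (h : fuelBound w z ≤ n) (k : ℕ) :
      mulF p q n w z = mulF p q (n + k) w z := by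
    induction k with
    | zero => rfl
    | succ k ih => rw [ih]; exact mulF_succ _ _ _ (by omega)
  rw [climb n h n', climb n' h' n, add_comm]

theorem mulF_eq_mulW {w z : EWord} {n : ℕ} (h : fuelBound w z ≤ n) :
    mulF p q n w z = mulW p q w z :=
  mulF_eq_mulF h (le_trans (fuelBound_le w z) (by simp only [depth]; omega))

end Fuel

section Equations

variable {p q : ℕ}

theorem mulW_nil_left (z : EWord) : mulW p q ([], []) z = ew p z := by
  rw [← mulF_eq_mulW (Nat.le_succ _)]; simp only [mulF]

theorem mulW_nil_right (w : EWord) : mulW p q w ([], []) = ew p w := by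
  rw [← mulF_eq_mulW (Nat.le_succ _)]
  obtain ⟨_ | _, _ | _⟩ := w <;> simp only [mulF]

theorem mulW_xy (u v : List ℕ+) : mulW p q (u, []) ([], v) = ew p (u, v) := by
  rw [← mulF_eq_mulW (Nat.le_succ _)]
  cases u <;> cases v <;> simp only [mulF]

theorem mulW_yx (u v : List ℕ+) : mulW p q ([], v) (u, []) = ew p (u, v) := by
  rw [← mulF_eq_mulW (Nat.le_succ _)]
  cases u <;> cases v <;> simp only [mulF]

theorem mulE_ew_right (r : ESp p) (z : EWord) :
    mulE p q r (ew p z) = r.sum fun w c => c • mulW p q w z := by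
  simp [mulE, ew]

theorem mulE_ew_left (w : EWord) (s : ESp p) :
    mulE p q (ew p w) s = s.sum fun z e => e • mulW p q w z := by
  simp [mulE, ew]

theorem mulE_unit_right (r : ESp p) : mulE p q r (ew p ([], [])) = r := by
  rw [mulE_ew_right]
  simp only [mulW_nil_right, ew, Finsupp.smul_single_one, Finsupp.sum_single]

theorem mulE_unit_left (s : ESp p) : mulE p q (ew p ([], [])) s = s := by
  rw [mulE_ew_left]
  simp only [mulW_nil_left, ew, Finsupp.smul_single_one, Finsupp.sum_single]

theorem mulW_mem_depthLE (w z : EWord) : mulW p q w z ∈ depthLE p (depth w + depth z) :=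
  mulF_mem_depthLE _ _ _ le_rfl

theorem mulW_mem_xSubspace (u u' : List ℕ+) : mulW p q (u, []) (u', []) ∈ xSubspace p :=
  mulF_mem_xSubspace _ _ _

theorem mulW_yy (a b : ℕ+) (as bs : List ℕ+) :
    mulW p q ([], a :: as) ([], b :: bs) =
      ycons p a (mulW p q ([], as) ([], b :: bs)) + ycons p b (mulW p q ([], a :: as) ([], bs)) +
        ycons p (a + b) (mulW p q ([], as) ([], bs)) +
        decSum q a b (fun i j => Del p (a : ℕ) (b : ℕ) (i : ℕ) (j : ℕ) •
          ycons p i (mulE p q (mulW p q ([], as) ([], bs)) (ew p ([j], [])))) +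
        decSum q a b (fun i j => Del p (a : ℕ) (b : ℕ) (i : ℕ) (j : ℕ) •
          ycons p i (mulE p q (mulW p q ([], as) ([], bs)) (ew p ([], [j])))) := by
  set K := 2 * (as.length + bs.length + 2) + 7
  have hK {w z : EWord} (h : depth w + depth z < as.length + bs.length + 2) :
      fuelBound w z ≤ K :=
    le_trans (fuelBound_le w z) (by omega)
  have inner (z : EWord) (hz : depth z = 1) :
      ((mulF p q K ([], as) ([], bs)).sum fun w c => c • mulF p q K w z) =
        mulE p q (mulW p q ([], as) ([], bs)) (ew p z) := by
    rw [mulE_ew_right, mulF_eq_mulW (hK (by grind [depth]))]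
    refine Finsupp.sum_congr fun w hw => ?_
    have hd : depth w ≤ _ := mulW_mem_depthLE _ _ hw
    rw [mulF_eq_mulW (hK (by grind [depth]))]
  rw [← mulF_eq_mulW (n := K + 1) (le_trans (fuelBound_le _ _) (by grind [depth]))]
  simp only [mulF, inner ([_], []) rfl, inner ([], [_]) rfl]
  rw [mulF_eq_mulW (hK (by grind [depth])), mulF_eq_mulW (hK (by grind [depth])),
    mulF_eq_mulW (hK (by grind [depth]))]

theorem mulF_split_sum_eq_mulE (u v u' v' : List ℕ+) {K : ℕ}
    (hK : 2 * (u.length + v.length + u'.length + v'.length) + 8 ≤ K) :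
    ((mulF p q K (u, []) (u', [])).sum fun w c =>
        (mulF p q K ([], v) ([], v')).sum fun z e => (c * e) • mulF p q K w z) =
      mulE p q (mulW p q (u, []) (u', [])) (mulW p q ([], v) ([], v')) := by
  rw [mulF_eq_mulW (le_trans (fuelBound_le _ _) (by grind [depth])),
    mulF_eq_mulW (le_trans (fuelBound_le _ _) (by grind [depth])), mulE]
  refine Finsupp.sum_congr fun w hw => Finsupp.sum_congr fun z hz => ?_
  have hwx : w.2 = [] := mulW_mem_xSubspace _ _ hw
  have hwd : depth w ≤ _ := mulW_mem_depthLE _ _ hw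
  have hzd : depth z ≤ _ := mulW_mem_depthLE _ _ hz
  rw [mulF_eq_mulW (by grind [fuelBound, depth])]

theorem mulW_split (u v u' v' : List ℕ+) :
    mulW p q (u, v) (u', v') =
      mulE p q (mulW p q (u, []) (u', [])) (mulW p q ([], v) ([], v')) := by
  obtain ⟨K, hK⟩ : ∃ K, fuelBound (u, v) (u', v') ≤ K + 1 ∧
      2 * (u.length + v.length + u'.length + v'.length) + 8 ≤ K :=
    ⟨_, le_trans (fuelBound_le _ _) (by grind [depth]), le_rfl⟩
  rcases u with _ | ⟨a, u⟩ <;> rcases v with _ | ⟨b, v⟩ <;>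
    rcases u' with _ | ⟨c, u'⟩ <;> rcases v' with _ | ⟨e, v'⟩
  all_goals try (simp only [mulW_nil_left, mulW_nil_right, mulW_xy, mulW_yx, mulE_ew_ew,
    mulE_unit_left, mulE_unit_right]; done)
  all_goals
    rw [← mulF_eq_mulW hK.1]
    simp only [mulF]
    exact mulF_split_sum_eq_mulE _ _ _ _ hK.2

end Equations

section XSubspace

variable {p q : ℕ}

@[elab_as_elim]
theorem xSubspace_induction {P : ESp p → Prop} {r : ESp p} (hr : r ∈ xSubspace p)
    (word : ∀ u, P (ew p (u, []))) (add : ∀ r s, P r → P s → P (r + s))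
    (smul : ∀ (c : ZMod p) r, P r → P (c • r)) : P r := by
  rw [xSubspace, Finsupp.supported_eq_span_single] at hr
  induction hr using Submodule.span_induction with
  | mem x hx => obtain ⟨⟨u, _⟩, rfl, rfl⟩ := hx; exact word u
  | zero => simpa using smul 0 _ (word [])
  | add _ _ _ _ hr hs => exact add _ _ hr hs
  | smul c _ _ hr => exact smul c _ hr

theorem ew_mem_xSubspace (u : List ℕ+) : ew p (u, []) ∈ xSubspace p :=
  ew_mem_supported rfl

theorem mulE_mem_xSubspace {r s : ESp p} (hr : r ∈ xSubspace p) (hs : s ∈ xSubspace p) :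
    mulE p q r s ∈ xSubspace p := by
  refine xSubspace_induction hr (fun u => ?_) (fun r r' hr hr' => ?_) (fun c r hr => ?_)
  · refine xSubspace_induction hs (fun u' => ?_) (fun s s' hs hs' => ?_) (fun c s hs => ?_)
    · rw [mulE_ew_ew]; exact mulW_mem_xSubspace u u'
    · rw [mulE_add_right]; exact add_mem hs hs'
    · rw [mulE_smul_right]; exact Submodule.smul_mem _ c hs
  · rw [mulE_add_left]; exact add_mem hr hr'
  · rw [mulE_smul_left]; exact Submodule.smul_mem _ c hr

/-- On `ℛ`, right multiplication by `y_v` (`setY_eq_mulE`). -/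
noncomputable def setY (p : ℕ) (v : List ℕ+) : ESp p →ₗ[ZMod p] ESp p :=
  Finsupp.lmapDomain (ZMod p) (ZMod p) fun t : EWord => (t.1, v)

theorem setY_ew (v : List ℕ+) (t : EWord) : setY p v (ew p t) = ew p (t.1, v) :=
  Finsupp.mapDomain_single

theorem ycons_setY (i : ℕ+) (v : List ℕ+) (r : ESp p) :
    ycons p i (setY p v r) = setY p (i :: v) r := by
  simp only [ycons, setY, Finsupp.lmapDomain_apply, ← Finsupp.mapDomain_comp]
  rfl

theorem setY_eq_mulE {r : ESp p} (hr : r ∈ xSubspace p) (v : List ℕ+) :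
    setY p v r = mulE p q r (ew p ([], v)) := by
  refine xSubspace_induction hr (fun u => ?_) (fun r s hr hs => ?_) (fun c r hr => ?_)
  · rw [setY_ew, mulE_ew_ew, mulW_xy]
  · rw [map_add, mulE_add_left, hr, hs]
  · rw [map_smul, mulE_smul_left, hr]

theorem setY_mem_assocIdeal {r : ESp p} (hr : r ∈ xSubspace p) (hr' : r ∈ assocIdeal p q)
    (v : List ℕ+) : setY p v r ∈ assocIdeal p q := by
  rw [setY_eq_mulE (q := q) hr]
  exact InA.mul_right _ hr'

theorem mulE_ew_of_mem_xSubspace {r : ESp p} (hr : r ∈ xSubspace p) (u v : List ℕ+) :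
    mulE p q r (ew p (u, v)) = setY p v (mulE p q r (ew p (u, []))) := by
  refine xSubspace_induction hr (fun w => ?_) (fun r s hr hs => ?_) (fun c r hr => ?_)
  · rw [mulE_ew_ew, mulE_ew_ew, mulW_split, mulW_nil_left,
      setY_eq_mulE (mulW_mem_xSubspace w u)]
  · rw [mulE_add_left, mulE_add_left, map_add, hr, hs]
  · rw [mulE_smul_left, mulE_smul_left, map_smul, hr]

theorem mulE_ycons_of_mem_xSubspace {r : ESp p} (hr : r ∈ xSubspace p) (i : ℕ+) (t : ESp p) :
    mulE p q r (ycons p i t) = ycons p i (mulE p q r t) := by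
  refine ESp.induction t (fun ⟨u, v⟩ => ?_) (fun t t' ht ht' => ?_) (fun c t ht => ?_)
  · rw [ycons_ew, mulE_ew_of_mem_xSubspace hr, mulE_ew_of_mem_xSubspace hr u v, ycons_setY]
  · rw [ycons_add, mulE_add_right, mulE_add_right, ycons_add, ht, ht']
  · rw [ycons_smul, mulE_smul_right, mulE_smul_right, ycons_smul, ht]

theorem mulE_setY {r s : ESp p} (hr : r ∈ xSubspace p) (hs : s ∈ xSubspace p) (v : List ℕ+) :
    mulE p q r (setY p v s) = setY p v (mulE p q r s) := by
  refine xSubspace_induction hs (fun u => ?_) (fun s s' hs hs' => ?_) (fun c s hs => ?_)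
  · rw [setY_ew, mulE_ew_of_mem_xSubspace hr]
  · rw [map_add, mulE_add_right, mulE_add_right, map_add, hs, hs']
  · rw [map_smul, mulE_smul_right, mulE_smul_right, map_smul, hs]

theorem setY_mulE {r s : ESp p} (hr : r ∈ xSubspace p) (hs : s ∈ xSubspace p) (v : List ℕ+) :
    mulE p q (setY p v r) s = setY p v (mulE p q r s) := by
  refine xSubspace_induction hr (fun u => ?_) (fun r r' hr hr' => ?_) (fun c r hr => ?_)
  · refine xSubspace_induction hs (fun u' => ?_) (fun s s' hs hs' => ?_) (fun c s hs => ?_)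
    · rw [setY_ew, mulE_ew_ew, mulE_ew_ew, mulW_split, mulW_nil_right,
        setY_eq_mulE (mulW_mem_xSubspace u u')]
    · rw [mulE_add_right, mulE_add_right, map_add, hs, hs']
    · rw [mulE_smul_right, mulE_smul_right, map_smul, hs]
  · rw [map_add, mulE_add_left, mulE_add_left, map_add, hr, hr']
  · rw [map_smul, mulE_smul_left, mulE_smul_left, map_smul, hr]

theorem setY_mulE_y {r : ESp p} (hr : r ∈ xSubspace p) (v v' : List ℕ+) :
    mulE p q (setY p v r) (ew p ([], v')) = mulE p q r (mulW p q ([], v) ([], v')) := by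
  refine xSubspace_induction hr (fun u => ?_) (fun r r' hr hr' => ?_) (fun c r hr => ?_)
  · rw [setY_ew, mulE_ew_ew, mulW_split, mulW_nil_right]
  · rw [map_add, mulE_add_left, mulE_add_left, hr, hr']
  · rw [map_smul, mulE_smul_left, mulE_smul_left, hr]

end XSubspace

section Associators

variable {p q : ℕ}

theorem ycons_assoc_mem {r s : ESp p} (hr : r ∈ xSubspace p) (hs : s ∈ xSubspace p)
    (i : ℕ+) (t : ESp p) :
    ycons p i (mulE p q r (mulE p q s t) - mulE p q (mulE p q r s) t) ∈ assocIdeal p q := by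
  refine ESp.induction t (fun ⟨u, v⟩ => ?_) (fun t t' ht ht' => ?_) (fun c t ht => ?_)
  · have hsu := mulE_mem_xSubspace (q := q) hs (ew_mem_xSubspace u)
    have hrs := mulE_mem_xSubspace (q := q) hr hs
    rw [mulE_ew_of_mem_xSubspace hs, mulE_setY hr hsu, mulE_ew_of_mem_xSubspace hrs, ← map_sub,
      ycons_setY]
    refine setY_mem_assocIdeal (sub_mem (mulE_mem_xSubspace hr hsu)
      (mulE_mem_xSubspace hrs (ew_mem_xSubspace u))) ?_ _
    rw [← neg_sub]
    exact neg_mem (InA.assoc _ _ _)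
  · simpa only [mulE_add_right, mulE_add_left, add_sub_add_comm, ycons_add] using add_mem ht ht'
  · simpa only [mulE_smul_right, mulE_smul_left, ← smul_sub, ycons_smul] using
      Submodule.smul_mem _ c ht

theorem ycons_assoc_x_mem {r : ESp p} (hr : r ∈ xSubspace p) (i j : ℕ+) (t : ESp p) :
    ycons p i (mulE p q r (mulE p q t (ew p ([j], []))) -
      mulE p q (mulE p q r t) (ew p ([j], []))) ∈ assocIdeal p q := by
  refine ESp.induction t (fun ⟨u, v⟩ => ?_) (fun t t' ht ht' => ?_) (fun c t ht => ?_)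
  · have hu := ew_mem_xSubspace (p := p) u
    have hj := ew_mem_xSubspace (p := p) [j]
    have hru := mulE_mem_xSubspace (q := q) hr hu
    have huj := mulE_mem_xSubspace (q := q) hu hj
    rw [← setY_ew v (u, []), setY_mulE hu hj, mulE_setY hr huj, mulE_setY hr hu, setY_mulE hru hj,
      ← map_sub, ycons_setY]
    refine setY_mem_assocIdeal (sub_mem (mulE_mem_xSubspace hr huj)
      (mulE_mem_xSubspace hru hj)) ?_ _
    rw [← neg_sub]
    exact neg_mem (InA.assoc _ _ _)
  · simpa only [mulE_add_right, mulE_add_left, add_sub_add_comm, ycons_add] using add_mem ht ht'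
  · simpa only [mulE_smul_right, mulE_smul_left, ← smul_sub, ycons_smul] using
      Submodule.smul_mem _ c ht

theorem ycons_assoc_y_mem {r : ESp p} (hr : r ∈ xSubspace p) (i j : ℕ+) (t : ESp p) :
    ycons p i (mulE p q r (mulE p q t (ew p ([], [j]))) -
      mulE p q (mulE p q r t) (ew p ([], [j]))) ∈ assocIdeal p q := by
  refine ESp.induction t (fun ⟨u, v⟩ => ?_) (fun t t' ht ht' => ?_) (fun c t ht => ?_)
  · have hu := ew_mem_xSubspace (p := p) u
    rw [← setY_ew v (u, []), setY_mulE_y hu, mulE_setY hr hu,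
      setY_mulE_y (mulE_mem_xSubspace hr hu)]
    exact ycons_assoc_mem hr hu i _
  · simpa only [mulE_add_right, mulE_add_left, add_sub_add_comm, ycons_add] using add_mem ht ht'
  · simpa only [mulE_smul_right, mulE_smul_left, ← smul_sub, ycons_smul] using
      Submodule.smul_mem _ c ht

end Associators

section Main

variable {p q : ℕ}

theorem mulW_ycons_ycons_sub_mem (a b : ℕ+) (u v u' v' : List ℕ+) :
    mulW p q (u, a :: v) (u', b :: v') -
        (ycons p a (mulW p q (u, v) (u', b :: v')) + ycons p b (mulW p q (u, a :: v) (u', v')) +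
          ycons p (a + b) (mulW p q (u, v) (u', v')) +
          decSum q a b (fun i j => Del p (a : ℕ) (b : ℕ) (i : ℕ) (j : ℕ) •
            ycons p i (mulE p q (mulW p q (u, v) (u', v')) (ew p ([j], []) + ew p ([], [j]))))) ∈
      assocIdeal p q := by
  have hR := mulW_mem_xSubspace (p := p) (q := q) u u'
  -- after rules (5) and (4), the difference is exactly the sum of the `Δ`-weighted associators
  convert add_mem
    (decSum_mem fun i j => Submodule.smul_mem _ (Del p (a : ℕ) (b : ℕ) (i : ℕ) (j : ℕ))
      (ycons_assoc_x_mem (q := q) hR i j (mulW p q ([], v) ([], v'))))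
    (decSum_mem fun i j => Submodule.smul_mem _ (Del p (a : ℕ) (b : ℕ) (i : ℕ) (j : ℕ))
      (ycons_assoc_y_mem (q := q) hR i j (mulW p q ([], v) ([], v')))) using 1
  rw [mulW_split u (a :: v), mulW_yy, mulW_split u v u' (b :: v'), mulW_split u (a :: v) u' v',
    mulW_split u v u' v']
  simp only [mulE_add_right, mulE_decSum_right, mulE_smul_right, mulE_ycons_of_mem_xSubspace hR,
    ycons_sub, ycons_add, smul_sub, smul_add, decSum_sub, decSum_add]
  abel

/-- The difference of the two sides of the congruence, for arbitrary `r, s` in place of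
`e(x_𝔞), e(x_𝔟)`. -/
noncomputable def yDefect (p q : ℕ) (a b : ℕ+) (r s : ESp p) : ESp p :=
  mulE p q (ycons p a r) (ycons p b s) -
    (ycons p a (mulE p q r (ycons p b s)) + ycons p b (mulE p q (ycons p a r) s) +
      ycons p (a + b) (mulE p q r s) +
      decSum q a b (fun i j => Del p (a : ℕ) (b : ℕ) (i : ℕ) (j : ℕ) •
        ycons p i (mulE p q (mulE p q r s) (ew p ([j], []) + ew p ([], [j])))))

variable (a b : ℕ+)

theorem yDefect_add_left (r r' s : ESp p) :
    yDefect p q a b (r + r') s = yDefect p q a b r s + yDefect p q a b r' s := by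
  simp only [yDefect, ycons_add, mulE_add_left, smul_add, decSum_add]
  abel

theorem yDefect_add_right (r s s' : ESp p) :
    yDefect p q a b r (s + s') = yDefect p q a b r s + yDefect p q a b r s' := by
  simp only [yDefect, ycons_add, mulE_add_left, mulE_add_right, smul_add, decSum_add]
  abel

theorem yDefect_smul_left (c : ZMod p) (r s : ESp p) :
    yDefect p q a b (c • r) s = c • yDefect p q a b r s := by
  simp only [yDefect, ycons_smul, mulE_smul_left, smul_sub, smul_add,
    smul_decSum, smul_comm c]

theorem yDefect_smul_right (c : ZMod p) (r s : ESp p) :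
    yDefect p q a b r (c • s) = c • yDefect p q a b r s := by
  simp only [yDefect, ycons_smul, mulE_smul_left, mulE_smul_right, smul_sub, smul_add,
    smul_decSum, smul_comm c]

theorem yDefect_mem_assocIdeal (r s : ESp p) : yDefect p q a b r s ∈ assocIdeal p q := by
  refine ESp.induction r (fun ⟨u, v⟩ => ?_) (fun r r' hr hr' => ?_) (fun c r hr => ?_)
  · refine ESp.induction s (fun ⟨u', v'⟩ => ?_) (fun s s' hs hs' => ?_) (fun c s hs => ?_)
    · simpa only [yDefect, ycons_ew, mulE_ew_ew] using mulW_ycons_ycons_sub_mem a b u v u' v'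
    · rw [yDefect_add_right]; exact add_mem hs hs'
    · rw [yDefect_smul_right]; exact Submodule.smul_mem _ c hs
  · rw [yDefect_add_left]; exact add_mem hr hr'
  · rw [yDefect_smul_left]; exact Submodule.smul_mem _ c hr

end Main

theorem ye_mul_ye_mod_assoc_general (p q : ℕ) (a b : ℕ+) (A B : List ℕ+) :
    InA p q
      (mulE p q (ycons p a (eWord p A)) (ycons p b (eWord p B)) -
        (ycons p a (mulE p q (eWord p A) (ycons p b (eWord p B))) +
          ycons p b (mulE p q (ycons p a (eWord p A)) (eWord p B)) +
          ycons p (a + b) (mulE p q (eWord p A) (eWord p B)) +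
          decSum q a b (fun i j =>
            Del p (a : ℕ) (b : ℕ) (i : ℕ) (j : ℕ) •
              ycons p i
                (mulE p q (mulE p q (eWord p A) (eWord p B))
                  (ew p ([j], []) + ew p ([], [j])))))) :=
  yDefect_mem_assocIdeal a b (eWord p A) (eWord p B)

/-- **Proposition.** For all `a, b ∈ ℕ` and all indices `𝔞, 𝔟`, modulo the associator
ideal `𝔄`:
`(y_a e(x_𝔞)) * (y_b e(x_𝔟)) ≡ y_a(e(x_𝔞) * (y_b e(x_𝔟))) + y_b((y_a e(x_𝔞)) * e(x_𝔟))
  + y_{a+b}(e(x_𝔞) * e(x_𝔟))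
  + ∑_{i+j=a+b, (q-1)∣j} Δ^{i,j}_{a,b} y_i((e(x_𝔞) * e(x_𝔟)) * e(x_j))`,
where `e(x_j) = x_j + y_j`. -/
theorem ye_mul_ye_mod_assoc (p q : ℕ) [Fact p.Prime] (n : ℕ) (hn : 0 < n) (hq : q = p ^ n)
    (a b : ℕ+) (A B : List ℕ+) :
    InA p q
      (mulE p q (ycons p a (eWord p A)) (ycons p b (eWord p B)) -
        (ycons p a (mulE p q (eWord p A) (ycons p b (eWord p B))) +
          ycons p b (mulE p q (ycons p a (eWord p A)) (eWord p B)) +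
          ycons p (a + b) (mulE p q (eWord p A) (eWord p B)) +
          decSum q a b (fun i j =>
            Del p (a : ℕ) (b : ℕ) (i : ℕ) (j : ℕ) •
              ycons p i
                (mulE p q (mulE p q (eWord p A) (eWord p B))
                  (ew p ([j], []) + ew p ([], [j])))))) :=
  ye_mul_ye_mod_assoc_general p q a b A B
end
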